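/- arXiv:2510.10997 — 7 statements merged into one kernel-verified Lean document; each statement's English description precedes it below -/
import Mathlib

section
/- Let φ : D_N × 2^{D_N} → ℝ satisfy φ_{ij}(g) = −φ_{ij}(τ_{ij}(g)) for all dyads (i,j) and networks g, where τ_{ij}(g) toggles the link (i,j) (adds it if absent, removes it if present). Then φ satisfies the path-independence condition φ_{ij}(g) + φ_{i'j'}(τ_{ij}(g)) = φ_{i'j'}(g) + φ_{ij}(τ_{i'j'}(g)) for all dyads (i,j), (i',j') and all networks g, if and only if there exists a function Ψ : 2^{D_N} → ℝ such that φ_{ij}(g) = Ψ(τ_{ij}(g)) − Ψ(g) for all (i,j) and g. Furthermore, such Ψ is unique up to an additive constant. -/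
/-! The converse direction and uniqueness are formal. For existence, `Ψ g` is defined by removing
the links of `g` one at a time and adding up the increments of `φ`; path independence says that
removing two links in either order gives the same total, which makes `Ψ g` independent of the
order of removal, and antisymmetry handles the case where the link is added rather than removed. -/

/-- A dyad on `N` players: an ordered pair of distinct players. -/
abbrev Dyad (N : ℕ) := {p : Fin N × Fin N // p.1 ≠ p.2}

/-- The switching map `τ_{ij}`: toggles the link `e` in the network `g`
(adds it if absent, removes it if present). -/
def toggle {N : ℕ} (g : Finset (Dyad N)) (e : Dyad N) : Finset (Dyad N) :=
  if e ∈ g then g.erase e else insert e g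

open scoped symmDiff

namespace Finset

variable {α : Type*} [DecidableEq α]

theorem symmDiff_singleton_of_mem {g : Finset α} {e : α} (he : e ∈ g) : g ∆ {e} = g.erase e := by
  ext a
  by_cases ha : a = e <;> simp [mem_symmDiff, ha, he]

theorem symmDiff_singleton_of_notMem {g : Finset α} {e : α} (he : e ∉ g) :
    g ∆ {e} = insert e g := by
  ext a
  by_cases ha : a = e <;> simp [mem_symmDiff, ha, he]

end Finset

theorem toggle_eq_symmDiff {N : ℕ} (g : Finset (Dyad N)) (e : Dyad N) : toggle g e = g ∆ {e} := by
  by_cases he : e ∈ g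
  · rw [toggle, if_pos he, Finset.symmDiff_singleton_of_mem he]
  · rw [toggle, if_neg he, Finset.symmDiff_singleton_of_notMem he]

namespace LinkFunction

open Finset

variable {α : Type*} [DecidableEq α]

def IsPotential (φ : α → Finset α → ℝ) (Ψ : Finset α → ℝ) : Prop :=
  ∀ e g, φ e g = Ψ (g ∆ {e}) - Ψ g

def PathIndependent (φ : α → Finset α → ℝ) : Prop :=
  ∀ e e' g, φ e g + φ e' (g ∆ {e}) = φ e' g + φ e (g ∆ {e'})

theorem IsPotential.pathIndependent {φ : α → Finset α → ℝ} {Ψ : Finset α → ℝ}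
    (hΨ : IsPotential φ Ψ) : PathIndependent φ := by
  intro e e' g
  rw [hΨ, hΨ, hΨ e, hΨ e', symmDiff_right_comm g {e'} {e}]
  ring

theorem IsPotential.eq_add_const {φ : α → Finset α → ℝ} {Ψ₁ Ψ₂ : Finset α → ℝ}
    (h₁ : IsPotential φ Ψ₁) (h₂ : IsPotential φ Ψ₂) (g : Finset α) :
    Ψ₁ g = Ψ₂ g + (Ψ₁ ∅ - Ψ₂ ∅) := by
  induction g using Finset.induction with
  | empty => ring
  | insert e g he ih =>
    have h₁e := h₁ e g
    have h₂e := h₂ e g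
    rw [symmDiff_singleton_of_notMem he] at h₁e h₂e
    linarith

noncomputable def potential (φ : α → Finset α → ℝ) (g : Finset α) : ℝ :=
  if h : g.Nonempty then potential φ (g.erase h.choose) + φ h.choose (g.erase h.choose) else 0
termination_by g.card
decreasing_by exact card_erase_lt_of_mem h.choose_spec

theorem potential_eq_of_mem {φ : α → Finset α → ℝ} (hφ : PathIndependent φ) {g : Finset α}
    {e : α} (he : e ∈ g) : potential φ g = potential φ (g.erase e) + φ e (g.erase e) := by
  induction g using Finset.strongInduction generalizing e with
  | H g ih =>
    have hg : g.Nonempty := ⟨e, he⟩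
    rw [potential, dif_pos hg]
    set m := hg.choose
    have hm : m ∈ g := hg.choose_spec
    obtain rfl | hem := eq_or_ne e m
    · rfl
    set h := (g.erase m).erase e
    have hem' : e ∈ g.erase m := mem_erase.2 ⟨hem, he⟩
    have hme : m ∈ g.erase e := mem_erase.2 ⟨hem.symm, hm⟩
    have hh : (g.erase e).erase m = h := erase_right_comm
    have hhe : h ∆ {e} = g.erase m := by
      rw [symmDiff_singleton_of_notMem (notMem_erase e _), insert_erase hem']
    have hhm : h ∆ {m} = g.erase e := by
      rw [← hh, symmDiff_singleton_of_notMem (notMem_erase m _), insert_erase hme]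
    have hswap := hφ e m h
    rw [hhe, hhm] at hswap
    rw [ih _ (erase_ssubset hm) hem', ih _ (erase_ssubset he) hme, hh]
    linarith

theorem isPotential_potential {φ : α → Finset α → ℝ} (hanti : ∀ e g, φ e g = -φ e (g ∆ {e}))
    (hφ : PathIndependent φ) : IsPotential φ (potential φ) := by
  intro e g
  by_cases he : e ∈ g
  · have hrem := potential_eq_of_mem hφ he
    have hflip := hanti e g
    rw [symmDiff_singleton_of_mem he] at hflip ⊢
    linarith
  · have hadd := potential_eq_of_mem hφ (mem_insert_self e g)
    rw [erase_insert he] at hadd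
    rw [symmDiff_singleton_of_notMem he]
    linarith

end LinkFunction

theorem stmt_1_general (N : ℕ) (φ : Dyad N → Finset (Dyad N) → ℝ)
    (hanti : ∀ (e : Dyad N) (g : Finset (Dyad N)), φ e g = - φ e (toggle g e)) :
    ((∀ (e e' : Dyad N) (g : Finset (Dyad N)),
        φ e g + φ e' (toggle g e) = φ e' g + φ e (toggle g e')) ↔
      (∃ Ψ : Finset (Dyad N) → ℝ, ∀ (e : Dyad N) (g : Finset (Dyad N)),
        φ e g = Ψ (toggle g e) - Ψ g)) ∧
    (∀ Ψ₁ Ψ₂ : Finset (Dyad N) → ℝ,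
      (∀ (e : Dyad N) (g : Finset (Dyad N)), φ e g = Ψ₁ (toggle g e) - Ψ₁ g) →
      (∀ (e : Dyad N) (g : Finset (Dyad N)), φ e g = Ψ₂ (toggle g e) - Ψ₂ g) →
      ∃ K : ℝ, ∀ g : Finset (Dyad N), Ψ₁ g = Ψ₂ g + K) := by
  simp only [toggle_eq_symmDiff] at hanti ⊢
  refine ⟨⟨fun hφ => ⟨_, LinkFunction.isPotential_potential hanti hφ⟩,
    fun ⟨_, hΨ⟩ => LinkFunction.IsPotential.pathIndependent hΨ⟩, ?_⟩
  intro Ψ₁ Ψ₂ h₁ h₂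
  exact ⟨_, LinkFunction.IsPotential.eq_add_const h₁ h₂⟩

/-- **Lemma 7 (conservative link functions admit a potential).**
If `φ : D_N × 2^{D_N} → ℝ` satisfies `φ_{ij}(g) = −φ_{ij}(τ_{ij}(g))`, then `φ` satisfies
the path-independence condition iff there exists `Ψ` with
`φ_{ij}(g) = Ψ(τ_{ij}(g)) − Ψ(g)`; moreover such `Ψ` is unique up to an additive
constant. -/
theorem stmt_1 (N : ℕ) (hN : 2 ≤ N) (φ : Dyad N → Finset (Dyad N) → ℝ)
    (hanti : ∀ (e : Dyad N) (g : Finset (Dyad N)), φ e g = - φ e (toggle g e)) :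
    ((∀ (e e' : Dyad N) (g : Finset (Dyad N)),
        φ e g + φ e' (toggle g e) = φ e' g + φ e (toggle g e')) ↔
      (∃ Ψ : Finset (Dyad N) → ℝ, ∀ (e : Dyad N) (g : Finset (Dyad N)),
        φ e g = Ψ (toggle g e) - Ψ g)) ∧
    (∀ Ψ₁ Ψ₂ : Finset (Dyad N) → ℝ,
      (∀ (e : Dyad N) (g : Finset (Dyad N)), φ e g = Ψ₁ (toggle g e) - Ψ₁ g) →
      (∀ (e : Dyad N) (g : Finset (Dyad N)), φ e g = Ψ₂ (toggle g e) - Ψ₂ g) →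
      ∃ K : ℝ, ∀ g : Finset (Dyad N), Ψ₁ g = Ψ₂ g + K) :=
  stmt_1_general N φ hanti
end

section
/- Two payoff profiles U and Ũ on the network formation game, with structure values V and Ṽ obtained by Möbius inversion (U_i(g) = Σ_{g'⊆g} V_i(g') and likewise for Ũ, Ṽ), are choice-equivalent if and only if V_i(g) = Ṽ_i(g) for every network g ⊆ D_N and every player i that is a source node of g (i.e. i ∈ J_src(g) = {i : ∃ j, (i,j) ∈ g}). -/
/-- The network `(s_i, g_{−i})`: `g` with player `i`'s strategy replaced by `s`. -/
def setStrat {N : ℕ} (g : Finset (Dyad N)) (i : Fin N) (s : Finset (Fin N)) :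
    Finset (Dyad N) :=
  g.filter (fun e => e.val.1 ≠ i) ∪
    Finset.univ.filter (fun e : Dyad N => e.val.1 = i ∧ e.val.2 ∈ s)

/-- Two payoff profiles are choice-equivalent:
`U_i(s_i,g_{−i}) − U_i(s_i',g_{−i}) = Ũ_i(s_i,g_{−i}) − Ũ_i(s_i',g_{−i})` always. -/
def ChoiceEquiv {N : ℕ} (U Ut : Fin N → Finset (Dyad N) → ℝ) : Prop :=
  ∀ (i : Fin N) (g : Finset (Dyad N)) (s s' : Finset (Fin N)),
    U i (setStrat g i s) - U i (setStrat g i s') =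
      Ut i (setStrat g i s) - Ut i (setStrat g i s')

/-- The structure values of `U`, obtained by Möbius inversion:
`V_i(g) = ∑_{g' ⊆ g} (−1)^{|g \ g'|} U_i(g')`. -/
noncomputable def mobiusV {N : ℕ} (U : Fin N → Finset (Dyad N) → ℝ)
    (i : Fin N) (g : Finset (Dyad N)) : ℝ :=
  ∑ g' ∈ g.powerset, (-1 : ℝ) ^ (g \ g').card * U i g'

/-- Player `i` is a source node of the structure `g`: `i ∈ J_src(g)`. -/
def IsSource {N : ℕ} (i : Fin N) (g : Finset (Dyad N)) : Prop :=
  ∃ e ∈ g, e.val.1 = i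

/-!
Put `W i := U i - Ũ i`. Choice-equivalence says exactly that `W i g` depends only on the links
of `g` not chosen by `i`, and since the structure values are linear in `U`, the claim is that
this happens iff the Möbius transform of `W i` vanishes on every network containing a link of
`i`. For any set function `f`, the Möbius transform at `insert e g` (with `e ∉ g`) is the
transform at `g` of the finite difference `t ↦ f (insert e t) - f t`; so `f` ignores `e` iff its
transform vanishes on all sets containing `e`, the converse direction coming from Möbius
inversion `f g = ∑ t ⊆ g, (moebiusTransform f) t`.
-/

namespace Finset

variable {α R : Type*} [DecidableEq α] [CommRing R]

noncomputable def moebiusTransform (f : Finset α → R) (g : Finset α) : R :=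
  ∑ t ∈ g.powerset, (-1 : R) ^ (g \ t).card * f t

theorem moebiusTransform_sub (f f' : Finset α → R) (g : Finset α) :
    moebiusTransform (f - f') g = moebiusTransform f g - moebiusTransform f' g := by
  simp only [moebiusTransform, Pi.sub_apply, mul_sub, sum_sub_distrib]

theorem moebiusTransform_insert (f : Finset α → R) {e : α} {g : Finset α} (he : e ∉ g) :
    moebiusTransform f (insert e g) =
      moebiusTransform (fun t => f (insert e t)) g - moebiusTransform f g := by
  have hsign : ∀ t ∈ g.powerset, (-1 : R) ^ (insert e g \ t).card = -(-1) ^ (g \ t).card := by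
    intro t ht
    have het : e ∉ t := fun h => he (mem_powerset.1 ht h)
    rw [insert_sdiff_of_notMem _ het, card_insert_of_notMem (by simp [he]), pow_succ, mul_neg_one]
  rw [moebiusTransform, sum_powerset_insert he, sum_congr rfl fun t ht => by rw [hsign t ht]]
  simp only [insert_sdiff_insert, sdiff_insert_of_notMem he, neg_mul, sum_neg_distrib,
    moebiusTransform]
  ring

theorem sum_powerset_moebiusTransform (f : Finset α → R) (g : Finset α) :
    ∑ t ∈ g.powerset, moebiusTransform f t = f g := by
  induction g using Finset.induction_on generalizing f with
  | empty => simp [moebiusTransform]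
  | insert e g he ih =>
    rw [sum_powerset_insert he, ← ih (fun t => f (insert e t)), ← sum_add_distrib]
    refine sum_congr rfl fun t ht => ?_
    rw [moebiusTransform_insert f fun h => he (mem_powerset.1 ht h)]
    ring

theorem moebiusTransform_eq_zero_of_forall_insert_eq {f : Finset α → R} {e : α}
    (hf : ∀ t, f (insert e t) = f t) {g : Finset α} (he : e ∈ g) :
    moebiusTransform f g = 0 := by
  rw [← insert_erase he, moebiusTransform_insert f (notMem_erase e g)]
  simp only [hf, sub_self]

theorem forall_eq_filter_iff_moebiusTransform_eq_zero (f : Finset α → R) (p : α → Prop)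
    [DecidablePred p] :
    (∀ t, f t = f (t.filter p)) ↔ ∀ g, (∃ e ∈ g, ¬ p e) → moebiusTransform f g = 0 := by
  constructor
  · rintro hf g ⟨e, he, hpe⟩
    refine moebiusTransform_eq_zero_of_forall_insert_eq (fun t => ?_) he
    rw [hf, hf t, filter_insert, if_neg hpe]
  · intro hf t
    rw [← sum_powerset_moebiusTransform f t, ← sum_powerset_moebiusTransform f (t.filter p)]
    refine (sum_subset (powerset_mono.2 (filter_subset p t)) fun g hgt hgp => ?_).symm
    rw [mem_powerset] at hgt hgp
    obtain ⟨e, he, hpe⟩ := not_subset.1 hgp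
    exact hf g ⟨e, he, fun hp => hpe (mem_filter.2 ⟨hgt he, hp⟩)⟩

end Finset

open Finset

theorem setStrat_filter_ne {N : ℕ} (g : Finset (Dyad N)) (i : Fin N) (s : Finset (Fin N)) :
    (setStrat g i s).filter (fun e => e.val.1 ≠ i) = g.filter (fun e => e.val.1 ≠ i) := by
  ext e
  simp only [setStrat, mem_filter, mem_union, mem_univ, true_and]
  tauto

theorem setStrat_empty {N : ℕ} (g : Finset (Dyad N)) (i : Fin N) :
    setStrat g i ∅ = g.filter (fun e => e.val.1 ≠ i) := by
  ext e
  simp [setStrat]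

theorem setStrat_outNeighbors {N : ℕ} (g : Finset (Dyad N)) (i : Fin N) :
    setStrat g i ((g.filter (fun e => e.val.1 = i)).image (fun e => e.val.2)) = g := by
  ext ⟨⟨a, b⟩, hab⟩
  simp only [setStrat, mem_union, mem_filter, mem_univ, true_and, mem_image]
  by_cases ha : a = i
  · subst ha
    constructor
    · rintro (⟨hg, -⟩ | ⟨-, ⟨⟨a', b'⟩, _⟩, ⟨hg, rfl⟩, rfl⟩) <;> exact hg
    · exact fun hg => Or.inr ⟨rfl, _, ⟨hg, rfl⟩, rfl⟩
  · simp [ha]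

theorem choiceEquiv_iff {N : ℕ} (U Ut : Fin N → Finset (Dyad N) → ℝ) :
    ChoiceEquiv U Ut ↔
      ∀ i g, (U i - Ut i) g = (U i - Ut i) (g.filter (fun e => e.val.1 ≠ i)) := by
  simp only [Pi.sub_apply]
  constructor
  · intro h i g
    have := h i g ((g.filter (fun e => e.val.1 = i)).image (fun e => e.val.2)) ∅
    rw [setStrat_outNeighbors, setStrat_empty] at this
    linarith
  · intro h i g s s'
    have hs := h i (setStrat g i s)
    have hs' := h i (setStrat g i s')
    rw [setStrat_filter_ne] at hs hs'
    linarith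

theorem stmt_3_general (N : ℕ) (U Ut : Fin N → Finset (Dyad N) → ℝ) :
    ChoiceEquiv U Ut ↔
      ∀ (g : Finset (Dyad N)) (i : Fin N), IsSource i g →
        mobiusV U i g = mobiusV Ut i g := by
  have hmobius : ∀ i g, mobiusV U i g - mobiusV Ut i g = moebiusTransform (U i - Ut i) g :=
    fun i g => (moebiusTransform_sub (U i) (Ut i) g).symm
  have hsource : ∀ (i : Fin N) (g : Finset (Dyad N)), IsSource i g ↔ ∃ e ∈ g, ¬ e.val.1 ≠ i := by
    simp [IsSource]
  simp only [choiceEquiv_iff, forall_eq_filter_iff_moebiusTransform_eq_zero, ← hmobius,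
    ← hsource, sub_eq_zero]
  exact forall_comm

/-- **Lemma 2 (choice-equivalence and structure values).** Two payoff profiles `U`, `Ũ`
with structure values `V`, `Ṽ` are choice-equivalent iff `V_i(g) = Ṽ_i(g)` for every
structure `g` and every source node `i ∈ J_src(g)`. -/
theorem stmt_3 (N : ℕ) (hN : 2 ≤ N) (U Ut : Fin N → Finset (Dyad N) → ℝ) :
    ChoiceEquiv U Ut ↔
      ∀ (g : Finset (Dyad N)) (i : Fin N), IsSource i g →
        mobiusV U i g = mobiusV Ut i g :=
  stmt_3_general N U Ut
end

section
/- Consider the continuous-time Markov jump process on the finite state space 2^{D_N} whose only allowed transitions are g → τ_{ij}(g), with rate λ_{ij}(g)·p_{ij}(g), where λ_{ij}(g) > 0 satisfies λ_{ij}(g) = λ_{ij}(τ_{ij}(g)), and p_{ij}(g) = [1 + exp(−β(U_i(τ_{ij}(g)) − U_i(g)))]^{−1} with β = (1−σ)/σ, σ ∈ (0,1). Then this Markov process is reversible (i.e. there exists a probability distribution π on 2^{D_N} satisfying detailed balance λ_{ij}(g) p_{ij}(g) π(g) = λ_{ij}(τ_{ij}(g)) p_{ij}(τ_{ij}(g))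 π(τ_{ij}(g)) for all g and (i,j)) if and only if the static game (J_N, 2^{D_N}, U) is a potential game. Moreover, if Φ is a potential of the static game, then the unique stationary distribution is the Gibbs measure π(g) = exp(βΦ(g)) / Σ_{g' ⊆ D_N} exp(βΦ(g')). -/
/-- `Φ` is a potential of the static game with payoffs `U`. -/
def IsPotential {N : ℕ} (U : Fin N → Finset (Dyad N) → ℝ)
    (Φ : Finset (Dyad N) → ℝ) : Prop :=
  ∀ (i : Fin N) (g : Finset (Dyad N)) (s s' : Finset (Fin N)),
    U i (setStrat g i s) - U i (setStrat g i s') =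
      Φ (setStrat g i s) - Φ (setStrat g i s')

/-- The logistic switching probability
`p_{ij}(g) = [1 + exp(−β(U_i(τ_{ij}(g)) − U_i(g)))]⁻¹`. -/
noncomputable def switchProb {N : ℕ} (U : Fin N → Finset (Dyad N) → ℝ) (β : ℝ)
    (e : Dyad N) (g : Finset (Dyad N)) : ℝ :=
  (1 + Real.exp (-(β * (U e.val.1 (toggle g e) - U e.val.1 g))))⁻¹

/-- `π` satisfies detailed balance for the jump rates
`g → τ_{ij}(g)` at rate `λ_{ij}(g) p_{ij}(g)`. -/
def DetailedBalance {N : ℕ} (lam : Dyad N → Finset (Dyad N) → ℝ)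
    (p : Dyad N → Finset (Dyad N) → ℝ) (π : Finset (Dyad N) → ℝ) : Prop :=
  ∀ (e : Dyad N) (g : Finset (Dyad N)),
    lam e g * p e g * π g =
      lam e (toggle g e) * p e (toggle g e) * π (toggle g e)

/-- `π` is a stationary distribution of the Markov jump process (Kolmogorov forward
equation equals zero at `π`). -/
def IsStationaryNet {N : ℕ} (lam : Dyad N → Finset (Dyad N) → ℝ)
    (p : Dyad N → Finset (Dyad N) → ℝ) (π : Finset (Dyad N) → ℝ) : Prop :=
  ∀ g : Finset (Dyad N),
    ∑ e : Dyad N,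
      lam e g * (p e (toggle g e) * π (toggle g e) - p e g * π g) = 0

/-- `π` is a probability distribution on the (finite) space of networks. -/
def IsProbDist {N : ℕ} (π : Finset (Dyad N) → ℝ) : Prop :=
  (∀ g, 0 ≤ π g) ∧ ∑ g : Finset (Dyad N), π g = 1

/-!
The switching probability is logistic, so `p_e(g) = exp (β ΔU) · p_e(τ_e g)` with
`ΔU = U_i(τ_e g) − U_i(g)`; as the rates `λ` are symmetric, detailed balance across `e` thus reads
`π(τ_e g) = exp (β ΔU) π(g)`. A game is a potential game exactly when every single link toggle
changes the owner's payoff by the same amount as `Φ`, so the Gibbs measure `exp (β Φ) / Z` solves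
these equations, and conversely a solution `π` (nowhere zero, since toggles connect all networks)
yields the potential `log π / β`. Uniqueness of the stationary distribution is a maximum principle
for `π / gibbs`, which stationarity makes a positively weighted average of its toggle-neighbours.
-/

section Network

variable {N : ℕ}

@[simp]
lemma toggle_toggle (g : Finset (Dyad N)) (e : Dyad N) : toggle (toggle g e) e = g := by
  by_cases h : e ∈ g <;> simp [toggle, h]

lemma toggle_of_notMem {g : Finset (Dyad N)} {e : Dyad N} (h : e ∉ g) :
    toggle g e = insert e g := if_neg h

lemma forall_of_toggle_closed {P : Finset (Dyad N) → Prop}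
    (hP : ∀ g e, P g → P (toggle g e)) {g₀ : Finset (Dyad N)} (h₀ : P g₀)
    (g : Finset (Dyad N)) : P g := by
  have hiff : ∀ g, P g ↔ P ∅ := by
    intro g
    induction g using Finset.induction_on with
    | empty => rfl
    | insert e g he ih =>
      rw [← toggle_of_notMem he, ← ih]
      exact ⟨fun h => by simpa using hP _ e h, hP g e⟩
  exact (hiff g).2 ((hiff g₀).1 h₀)

def strat (g : Finset (Dyad N)) (i : Fin N) : Finset (Fin N) :=
  (g.filter (fun e => e.val.1 = i)).image (fun e => e.val.2)

lemma setStrat_strat (g : Finset (Dyad N)) (i : Fin N) : setStrat g i (strat g i) = g := by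
  ext x
  simp only [setStrat, strat, Finset.mem_union, Finset.mem_filter, Finset.mem_univ,
    Finset.mem_image, true_and]
  constructor
  · rintro (⟨hx, -⟩ | ⟨hx, y, ⟨hy, hyi⟩, hyx⟩)
    · exact hx
    · rwa [← Subtype.ext (Prod.ext (hyi.trans hx.symm) hyx)]
  · intro hx
    by_cases hxi : x.val.1 = i
    · exact Or.inr ⟨hxi, x, ⟨hx, hxi⟩, rfl⟩
    · exact Or.inl ⟨hx, hxi⟩

lemma setStrat_toggle (g : Finset (Dyad N)) (e : Dyad N) (s : Finset (Fin N)) :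
    setStrat (toggle g e) e.val.1 s = setStrat g e.val.1 s := by
  unfold setStrat
  congr 1
  ext x
  by_cases hxe : x = e
  · subst hxe; simp
  · by_cases h : e ∈ g <;> simp [toggle, h, hxe]

lemma setStrat_insert_self (g : Finset (Dyad N)) (i : Fin N) (s : Finset (Fin N)) :
    setStrat g i (insert i s) = setStrat g i s := by
  unfold setStrat
  congr 1
  ext x
  simp only [Finset.mem_filter, Finset.mem_univ, true_and, Finset.mem_insert]
  constructor
  · rintro ⟨hx, hxi | hxs⟩
    · exact absurd (hx.trans hxi.symm) x.prop
    · exact ⟨hx, hxs⟩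
  · rintro ⟨hx, hxs⟩
    exact ⟨hx, Or.inr hxs⟩

lemma setStrat_insert {i j : Fin N} (hij : i ≠ j) (g : Finset (Dyad N))
    {s : Finset (Fin N)} (hj : j ∉ s) :
    setStrat g i (insert j s) = toggle (setStrat g i s) ⟨(i, j), hij⟩ := by
  rw [toggle_of_notMem (by simp [setStrat, hj])]
  ext x
  have : x = ⟨(i, j), hij⟩ ↔ x.val.1 = i ∧ x.val.2 = j := by
    rw [Subtype.ext_iff, Prod.ext_iff]
  simp only [setStrat, Finset.mem_union, Finset.mem_filter, Finset.mem_univ, true_and,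
    Finset.mem_insert, this]
  tauto

theorem isPotential_iff {U : Fin N → Finset (Dyad N) → ℝ} {Φ : Finset (Dyad N) → ℝ} :
    IsPotential U Φ ↔
      ∀ g e, U e.val.1 (toggle g e) - U e.val.1 g = Φ (toggle g e) - Φ g := by
  constructor
  · intro hP g e
    have h := hP e.val.1 g (strat (toggle g e) e.val.1) (strat g e.val.1)
    rwa [← setStrat_toggle g e, setStrat_strat, setStrat_strat] at h
  · intro hK i g s s'
    suffices h : ∀ t, U i (setStrat g i t) - Φ (setStrat g i t) =
        U i (setStrat g i ∅) - Φ (setStrat g i ∅) by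
      linarith [h s, h s']
    intro t
    induction t using Finset.induction_on with
    | empty => rfl
    | insert j t hj ih =>
      rcases eq_or_ne i j with rfl | hij
      · rwa [setStrat_insert_self]
      · rw [setStrat_insert hij g hj]
        linarith [hK (setStrat g i t) ⟨(i, j), hij⟩]

end Network

section Dynamics

variable {N : ℕ} {lam p : Dyad N → Finset (Dyad N) → ℝ}

lemma DetailedBalance.isStationaryNet (hsym : ∀ e g, lam e g = lam e (toggle g e))
    {π : Finset (Dyad N) → ℝ} (h : DetailedBalance lam p π) : IsStationaryNet lam p π := by
  intro g
  refine Finset.sum_eq_zero fun e _ => ?_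
  have he := h e g
  rw [← hsym] at he
  linear_combination -he

/-- Discrete maximum principle: the set where `c` attains its maximum is closed under toggling. -/
lemma exists_forall_eq_of_sum_mul_toggle_sub_eq_zero {a : Dyad N → Finset (Dyad N) → ℝ}
    (ha : ∀ e g, 0 < a e g) {c : Finset (Dyad N) → ℝ}
    (hc : ∀ g, ∑ e, a e g * (c (toggle g e) - c g) = 0) :
    ∃ k, ∀ g, c g = k := by
  obtain ⟨g₀, hmax⟩ := Finite.exists_max c
  refine ⟨c g₀, forall_of_toggle_closed (fun g e (hg : c g = c g₀) => ?_) rfl⟩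
  have hle : ∀ e ∈ Finset.univ, a e g * (c (toggle g e) - c g) ≤ 0 := fun e _ =>
    mul_nonpos_of_nonneg_of_nonpos (ha e g).le (by linarith [hmax (toggle g e)])
  have hterm := (Finset.sum_eq_zero_iff_of_nonpos hle).1 (hc g) e (Finset.mem_univ e)
  rcases mul_eq_zero.1 hterm with h | h
  · exact absurd h (ha e g).ne'
  · linarith

theorem IsStationaryNet.eq_of_detailedBalance (hpos : ∀ e g, 0 < lam e g)
    (hsym : ∀ e g, lam e g = lam e (toggle g e)) (hp : ∀ e g, 0 < p e g)
    {μ π : Finset (Dyad N) → ℝ} (hμ : ∀ g, 0 < μ g) (hμ₁ : ∑ g, μ g = 1)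
    (hDB : DetailedBalance lam p μ) (hπ : IsStationaryNet lam p π) (hπ₁ : ∑ g, π g = 1) :
    π = μ := by
  obtain ⟨k, hk⟩ : ∃ k, ∀ g, π g / μ g = k := by
    refine exists_forall_eq_of_sum_mul_toggle_sub_eq_zero
      (a := fun e g => lam e g * p e g * μ g)
      (fun e g => mul_pos (mul_pos (hpos e g) (hp e g)) (hμ g)) fun g => ?_
    rw [← hπ g]
    refine Finset.sum_congr rfl fun e _ => ?_
    have he := hDB e g
    rw [← hsym] at he
    have := (hμ g).ne'
    have := (hμ (toggle g e)).ne'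
    field_simp
    linear_combination π (toggle g e) * he
  have hπk : π = fun g => k * μ g := funext fun g => by rw [← hk g, div_mul_cancel₀ _ (hμ g).ne']
  rw [hπk, ← Finset.mul_sum, hμ₁, mul_one] at hπ₁
  rw [hπk, hπ₁]
  exact funext fun g => one_mul _

end Dynamics

lemma inv_one_add_exp_neg (x : ℝ) : (1 + Real.exp (-x))⁻¹ = Real.exp x * (1 + Real.exp x)⁻¹ := by
  rw [Real.exp_neg]
  field_simp
  ring

section Game

variable {N : ℕ}

lemma switchProb_pos (U : Fin N → Finset (Dyad N) → ℝ) (β : ℝ) (e : Dyad N)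
    (g : Finset (Dyad N)) : 0 < switchProb U β e g := by
  unfold switchProb; positivity

lemma switchProb_eq_exp_mul_switchProb_toggle (U : Fin N → Finset (Dyad N) → ℝ) (β : ℝ)
    (e : Dyad N) (g : Finset (Dyad N)) :
    switchProb U β e g =
      Real.exp (β * (U e.val.1 (toggle g e) - U e.val.1 g)) *
        switchProb U β e (toggle g e) := by
  rw [switchProb, switchProb, toggle_toggle, inv_one_add_exp_neg]
  ring_nf

theorem detailedBalance_switchProb_iff {lam : Dyad N → Finset (Dyad N) → ℝ}
    (hpos : ∀ e g, 0 < lam e g) (hsym : ∀ e g, lam e g = lam e (toggle g e))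
    {U : Fin N → Finset (Dyad N) → ℝ} {β : ℝ} {π : Finset (Dyad N) → ℝ} :
    DetailedBalance lam (switchProb U β) π ↔
      ∀ e g, π (toggle g e) = Real.exp (β * (U e.val.1 (toggle g e) - U e.val.1 g)) * π g := by
  refine forall₂_congr fun e g => ?_
  have hq := mul_pos (hpos e g) (switchProb_pos U β e (toggle g e))
  rw [← hsym, switchProb_eq_exp_mul_switchProb_toggle, eq_comm]
  rw [show ∀ a b c d : ℝ, a * (b * c) * d = a * c * (b * d) by intros; ring, mul_right_inj' hq.ne']

noncomputable def gibbs (β : ℝ) (Φ : Finset (Dyad N) → ℝ) (g : Finset (Dyad N)) : ℝ :=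
  Real.exp (β * Φ g) / ∑ g', Real.exp (β * Φ g')

lemma gibbs_pos (β : ℝ) (Φ : Finset (Dyad N) → ℝ) (g : Finset (Dyad N)) : 0 < gibbs β Φ g :=
  div_pos (Real.exp_pos _) (Finset.sum_pos (fun _ _ => Real.exp_pos _) Finset.univ_nonempty)

lemma sum_gibbs (β : ℝ) (Φ : Finset (Dyad N) → ℝ) : ∑ g, gibbs β Φ g = 1 := by
  simp only [gibbs, ← Finset.sum_div]
  exact div_self (Finset.sum_pos (fun _ _ => Real.exp_pos _) Finset.univ_nonempty).ne'

lemma isProbDist_gibbs (β : ℝ) (Φ : Finset (Dyad N) → ℝ) : IsProbDist (gibbs β Φ) :=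
  ⟨fun g => (gibbs_pos β Φ g).le, sum_gibbs β Φ⟩

lemma gibbs_toggle {U : Fin N → Finset (Dyad N) → ℝ} {Φ : Finset (Dyad N) → ℝ}
    (hΦ : IsPotential U Φ) (β : ℝ) (e : Dyad N) (g : Finset (Dyad N)) :
    gibbs β Φ (toggle g e) =
      Real.exp (β * (U e.val.1 (toggle g e) - U e.val.1 g)) * gibbs β Φ g := by
  rw [isPotential_iff.1 hΦ g e, gibbs, gibbs, mul_div_assoc', ← Real.exp_add]
  ring_nf

theorem detailedBalance_gibbs {lam : Dyad N → Finset (Dyad N) → ℝ}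
    (hpos : ∀ e g, 0 < lam e g) (hsym : ∀ e g, lam e g = lam e (toggle g e))
    {U : Fin N → Finset (Dyad N) → ℝ} {Φ : Finset (Dyad N) → ℝ} (hΦ : IsPotential U Φ)
    (β : ℝ) : DetailedBalance lam (switchProb U β) (gibbs β Φ) :=
  (detailedBalance_switchProb_iff hpos hsym).2 (gibbs_toggle hΦ β)

theorem isPotential_log_div_of_detailedBalance {lam : Dyad N → Finset (Dyad N) → ℝ}
    (hpos : ∀ e g, 0 < lam e g) (hsym : ∀ e g, lam e g = lam e (toggle g e))
    {U : Fin N → Finset (Dyad N) → ℝ} {β : ℝ} (hβ : β ≠ 0) {π : Finset (Dyad N) → ℝ}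
    (hπ₁ : ∑ g, π g = 1) (hDB : DetailedBalance lam (switchProb U β) π) :
    IsPotential U (fun g => Real.log (π g) / β) := by
  rw [detailedBalance_switchProb_iff hpos hsym] at hDB
  obtain ⟨g₀, hg₀⟩ : ∃ g₀, π g₀ ≠ 0 := by
    by_contra! h
    simp [h] at hπ₁
  have hne : ∀ g, π g ≠ 0 := forall_of_toggle_closed (fun g e hg => by
    rw [hDB]; exact mul_ne_zero (Real.exp_ne_zero _) hg) hg₀
  refine isPotential_iff.2 fun g e => ?_
  rw [hDB, Real.log_mul (Real.exp_ne_zero _) (hne g), Real.log_exp]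
  field_simp
  ring

end Game

theorem stmt_5_general (N : ℕ) (U : Fin N → Finset (Dyad N) → ℝ)
    (lam : Dyad N → Finset (Dyad N) → ℝ)
    (hpos : ∀ e g, 0 < lam e g)
    (hsym : ∀ e g, lam e g = lam e (toggle g e))
    (σ : ℝ) (hσ : σ ∈ Set.Ioo (0 : ℝ) 1) (β : ℝ) (hβ : β = (1 - σ) / σ) :
    ((∃ π : Finset (Dyad N) → ℝ, IsProbDist π ∧
        DetailedBalance lam (switchProb U β) π) ↔
      ∃ Φ : Finset (Dyad N) → ℝ, IsPotential U Φ) ∧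
    (∀ Φ : Finset (Dyad N) → ℝ, IsPotential U Φ →
      (IsProbDist (fun g : Finset (Dyad N) =>
          Real.exp (β * Φ g) / ∑ g' : Finset (Dyad N), Real.exp (β * Φ g')) ∧
       IsStationaryNet lam (switchProb U β) (fun g =>
          Real.exp (β * Φ g) / ∑ g' : Finset (Dyad N), Real.exp (β * Φ g')) ∧
       ∀ π : Finset (Dyad N) → ℝ, IsProbDist π →
          IsStationaryNet lam (switchProb U β) π →
          π = fun g => Real.exp (β * Φ g) / ∑ g' : Finset (Dyad N), Real.exp (β * Φ g'))) := by
  have hβ₀ : β ≠ 0 := by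
    rw [hβ]
    exact div_ne_zero (by linarith [hσ.2]) hσ.1.ne'
  refine ⟨⟨fun ⟨π, hπ, hDB⟩ => ⟨_, isPotential_log_div_of_detailedBalance hpos hsym hβ₀ hπ.2 hDB⟩,
    fun ⟨Φ, hΦ⟩ => ⟨_, isProbDist_gibbs β Φ, detailedBalance_gibbs hpos hsym hΦ β⟩⟩, ?_⟩
  intro Φ hΦ
  have hDB := detailedBalance_gibbs hpos hsym hΦ β
  refine ⟨isProbDist_gibbs β Φ, hDB.isStationaryNet hsym, fun π hπ hstat => ?_⟩
  exact hstat.eq_of_detailedBalance hpos hsym (switchProb_pos U β) (gibbs_pos β Φ)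
    (sum_gibbs β Φ) hDB hπ.2

/-- **Proposition 3.** The dynamic network formation process is reversible iff the
static game is a potential game; and if `Φ` is a potential, the Gibbs measure
`π(g) = exp(βΦ(g)) / ∑_{g'} exp(βΦ(g'))` is the unique stationary distribution. -/
theorem stmt_5 (N : ℕ) (hN : 2 ≤ N) (U : Fin N → Finset (Dyad N) → ℝ)
    (lam : Dyad N → Finset (Dyad N) → ℝ)
    (hpos : ∀ e g, 0 < lam e g)
    (hsym : ∀ e g, lam e g = lam e (toggle g e))
    (σ : ℝ) (hσ : σ ∈ Set.Ioo (0 : ℝ) 1) (β : ℝ) (hβ : β = (1 - σ) / σ) :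
    ((∃ π : Finset (Dyad N) → ℝ, IsProbDist π ∧
        DetailedBalance lam (switchProb U β) π) ↔
      ∃ Φ : Finset (Dyad N) → ℝ, IsPotential U Φ) ∧
    (∀ Φ : Finset (Dyad N) → ℝ, IsPotential U Φ →
      (IsProbDist (fun g : Finset (Dyad N) =>
          Real.exp (β * Φ g) / ∑ g' : Finset (Dyad N), Real.exp (β * Φ g')) ∧
       IsStationaryNet lam (switchProb U β) (fun g =>
          Real.exp (β * Φ g) / ∑ g' : Finset (Dyad N), Real.exp (β * Φ g')) ∧
       ∀ π : Finset (Dyad N) → ℝ, IsProbDist π →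
          IsStationaryNet lam (switchProb U β) π →
          π = fun g => Real.exp (β * Φ g) / ∑ g' : Finset (Dyad N), Real.exp (β * Φ g'))) :=
  stmt_5_general N U lam hpos hsym σ hσ β hβ
end

section
/- In the simple trade game with N ≥ 2 firms, payoffs U_i(g) = v·|{j : (i,j) ∈ g and (j,i) ∈ g}| − c·|{j : (i,j) ∈ g}| with v, c > 0, the function Φ(g) = (v/2)·|{(i,j) ∈ g : (j,i) ∈ g}| − c·|g| is a potential of the game, and: if v < 2c the empty network is the unique maximizer of Φ over all networks g ⊆ D_N; if v > 2c the complete network D_N is the unique maximizer of Φ. -/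
/-- The reversed dyad `(j,i)` of the dyad `(i,j)`. -/
def Dyad.swap {N : ℕ} (e : Dyad N) : Dyad N :=
  ⟨(e.val.2, e.val.1), Ne.symm e.prop⟩

/-- Payoffs of the simple trade game:
`U_i(g) = v·#{j : ij ∈ g ∧ ji ∈ g} − c·#{j : ij ∈ g}`. -/
noncomputable def tradeU {N : ℕ} (v c : ℝ) (i : Fin N) (g : Finset (Dyad N)) : ℝ :=
  v * (g.filter (fun e => e.val.1 = i ∧ e.swap ∈ g)).card -
    c * (g.filter (fun e => e.val.1 = i)).card

/-- The potential of the simple trade game: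
`Φ(g) = (v/2)·#{ij ∈ g : ji ∈ g} − c·|g|`. -/
noncomputable def tradePhi {N : ℕ} (v c : ℝ) (g : Finset (Dyad N)) : ℝ :=
  (v / 2) * (g.filter (fun e => e.swap ∈ g)).card - c * g.card

/-! For each player `i`, `Φ − U_i` only involves the links that `i` does not send: a reciprocated
pair `{ij, ji}` touching `i` is counted twice in `Φ`'s count of reciprocated links, so its weight
`v/2` twice over is exactly `i`'s benefit `v` from it, and `c·|g|` is `i`'s cost plus that of the
others. For the maximizers, at most all links are reciprocated, so `Φ(g) ≤ (v/2 − c)·|g|`, with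
equality for the complete network; the sign of `v/2 − c` decides which extreme network wins. -/

open Finset

namespace Dyad

variable {N : ℕ}

@[simp] lemma swap_fst (e : Dyad N) : e.swap.val.1 = e.val.2 := rfl

@[simp] lemma swap_snd (e : Dyad N) : e.swap.val.2 = e.val.1 := rfl

@[simp] lemma swap_swap (e : Dyad N) : e.swap.swap = e := rfl

end Dyad

section Potential

variable {N : ℕ}

lemma mem_setStrat {g : Finset (Dyad N)} {i : Fin N} {s : Finset (Fin N)} {e : Dyad N} :
    e ∈ setStrat g i s ↔ (e ∈ g ∧ e.val.1 ≠ i) ∨ (e.val.1 = i ∧ e.val.2 ∈ s) := by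
  simp [setStrat]

lemma filter_setStrat (g : Finset (Dyad N)) (i : Fin N) (s : Finset (Fin N)) :
    (setStrat g i s).filter (fun e => e.val.1 ≠ i) = g.filter (fun e => e.val.1 ≠ i) := by
  ext e
  simp only [mem_filter, mem_setStrat]
  tauto

lemma IsPotential.of_eq_add {U : Fin N → Finset (Dyad N) → ℝ} {Φ : Finset (Dyad N) → ℝ}
    (R : Fin N → Finset (Dyad N) → ℝ)
    (hR : ∀ i g, Φ g = U i g + R i (g.filter (fun e => e.val.1 ≠ i))) :
    IsPotential U Φ := by
  intro i g s s'
  rw [hR i (setStrat g i s), hR i (setStrat g i s'), filter_setStrat, filter_setStrat]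
  ring

end Potential

section TradeGame

variable {N : ℕ}

lemma card_filter_snd_eq_card_filter_fst (M : Finset (Dyad N)) (hM : ∀ e ∈ M, e.swap ∈ M)
    (i : Fin N) :
    #(M.filter (fun e => e.val.2 = i)) = #(M.filter (fun e => e.val.1 = i)) := by
  refine card_nbij' Dyad.swap Dyad.swap ?_ ?_ (fun e _ => rfl) (fun e _ => rfl) <;>
  · intro e he
    simp only [coe_filter, Set.mem_ofPred_eq, Dyad.swap_fst, Dyad.swap_snd] at he ⊢
    exact ⟨hM e he.1, he.2⟩

/-- Reciprocated links sent to `i` are the reverses of those sent by `i`, hence the factor `2`. -/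
lemma card_reciprocated_eq (i : Fin N) (g : Finset (Dyad N)) :
    #(g.filter (fun e => e.swap ∈ g)) =
      2 * #(g.filter (fun e => e.val.1 = i ∧ e.swap ∈ g)) +
        #((g.filter (fun e => e.val.1 ≠ i)).filter
          (fun e => e.val.2 ≠ i ∧ e.swap ∈ g.filter (fun e => e.val.1 ≠ i))) := by
  set M := g.filter (fun e => e.swap ∈ g) with hM
  have hM_swap : ∀ e ∈ M, e.swap ∈ M := by
    intro e he
    simp only [hM, mem_filter, Dyad.swap_swap] at he ⊢
    exact he.symm
  have split_fst := card_filter_add_card_filter_not (s := M) (fun e => e.val.1 = i)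
  have split_snd := card_filter_add_card_filter_not (s := M.filter (fun e => ¬ e.val.1 = i))
    (fun e => e.val.2 = i)
  have sent : M.filter (fun e => e.val.1 = i) = g.filter (fun e => e.val.1 = i ∧ e.swap ∈ g) := by
    ext e
    simp only [hM, mem_filter]
    tauto
  have received : (M.filter (fun e => ¬ e.val.1 = i)).filter (fun e => e.val.2 = i) =
      M.filter (fun e => e.val.2 = i) := by
    ext e
    simp only [mem_filter, and_congr_left_iff, and_iff_left_iff_imp]
    intro h2 _ h1
    exact e.prop (h1.trans h2.symm)
  have away : (M.filter (fun e => ¬ e.val.1 = i)).filter (fun e => ¬ e.val.2 = i) =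
      (g.filter (fun e => e.val.1 ≠ i)).filter
        (fun e => e.val.2 ≠ i ∧ e.swap ∈ g.filter (fun e => e.val.1 ≠ i)) := by
    ext e
    simp only [hM, mem_filter, Dyad.swap_fst]
    tauto
  rw [received, card_filter_snd_eq_card_filter_fst M hM_swap, away, sent] at split_snd
  rw [sent] at split_fst
  omega

noncomputable def tradeResidual (v c : ℝ) (i : Fin N) (h : Finset (Dyad N)) : ℝ :=
  (v / 2) * #(h.filter (fun e => e.val.2 ≠ i ∧ e.swap ∈ h)) - c * #h

lemma tradePhi_eq_tradeU_add (v c : ℝ) (i : Fin N) (g : Finset (Dyad N)) :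
    tradePhi v c g = tradeU v c i g + tradeResidual v c i (g.filter (fun e => e.val.1 ≠ i)) := by
  have hcard := card_filter_add_card_filter_not (s := g) (fun e => e.val.1 = i)
  rw [tradePhi, tradeU, tradeResidual, card_reciprocated_eq i g, ← hcard]
  push_cast
  ring

lemma isPotential_tradePhi (v c : ℝ) : IsPotential (tradeU (N := N) v c) (tradePhi v c) :=
  IsPotential.of_eq_add (tradeResidual v c) (tradePhi_eq_tradeU_add v c)

lemma tradePhi_le {v c : ℝ} (hv : 0 ≤ v) (g : Finset (Dyad N)) :
    tradePhi v c g ≤ (v / 2 - c) * #g := by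
  have h := (Nat.cast_le (α := ℝ)).2 (card_filter_le g (fun e => e.swap ∈ g))
  rw [tradePhi]
  nlinarith

lemma tradePhi_univ (v c : ℝ) :
    tradePhi v c (univ : Finset (Dyad N)) = (v / 2 - c) * #(univ : Finset (Dyad N)) := by
  rw [tradePhi, filter_true_of_mem (fun e _ => mem_univ e.swap)]
  ring

lemma tradePhi_empty (v c : ℝ) : tradePhi v c (∅ : Finset (Dyad N)) = 0 := by
  simp [tradePhi]

end TradeGame

theorem stmt_8_general (N : ℕ) (v c : ℝ) (hv : 0 < v) :
    IsPotential (tradeU (N := N) v c) (tradePhi v c) ∧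
    (v < 2 * c → ∀ g : Finset (Dyad N), g ≠ ∅ →
      tradePhi v c g < tradePhi v c (∅ : Finset (Dyad N))) ∧
    (2 * c < v → ∀ g : Finset (Dyad N), g ≠ Finset.univ →
      tradePhi v c g < tradePhi v c (Finset.univ : Finset (Dyad N))) := by
  refine ⟨isPotential_tradePhi v c, fun hvc g hg => ?_, fun hvc g hg => ?_⟩
  · have hg_pos : (0 : ℝ) < #g := by exact_mod_cast card_pos.2 (nonempty_iff_ne_empty.2 hg)
    calc tradePhi v c g ≤ (v / 2 - c) * #g := tradePhi_le hv.le g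
      _ < 0 := mul_neg_of_neg_of_pos (by linarith) hg_pos
      _ = tradePhi v c ∅ := (tradePhi_empty v c).symm
  · have hg_lt : (#g : ℝ) < #(univ : Finset (Dyad N)) := by
      exact_mod_cast card_lt_card (ssubset_univ_iff.2 hg)
    calc tradePhi v c g ≤ (v / 2 - c) * #g := tradePhi_le hv.le g
      _ < (v / 2 - c) * #(univ : Finset (Dyad N)) := by gcongr; linarith
      _ = tradePhi v c univ := (tradePhi_univ v c).symm

/-- **The simple trade game (Example 1).** `Φ` is a potential of the trade game; if
`v < 2c` the empty network is the unique maximizer of `Φ`, and if `v > 2c` the complete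
network `D_N` is the unique maximizer of `Φ`. -/
theorem stmt_8 (N : ℕ) (hN : 2 ≤ N) (v c : ℝ) (hv : 0 < v) (hc : 0 < c) :
    IsPotential (tradeU (N := N) v c) (tradePhi v c) ∧
    (v < 2 * c → ∀ g : Finset (Dyad N), g ≠ ∅ →
      tradePhi v c g < tradePhi v c (∅ : Finset (Dyad N))) ∧
    (2 * c < v → ∀ g : Finset (Dyad N), g ≠ Finset.univ →
      tradePhi v c g < tradePhi v c (Finset.univ : Finset (Dyad N))) :=
  stmt_8_general N v c hv
end

section
/- Let m be a finite directed graph on vertex set {1,...,n} with edge set E ⊆ {(i,j) : i ≠ j} having e = |E| ≥ 1 edges, and let h : [0,1]² → [0,1] be measurable. Then ∫_{[0,1]^n} ∏_{(i,j)∈E} h(x_i, x_j) dx_1⋯dx_n ≤ ∫_{[0,1]²} h(x,y)^e dx dy, with equality when e = 1. -/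
open MeasureTheory

/-- The unit cube `[0,1]^n` in `Fin n → ℝ`. -/
def unitCube (n : ℕ) : Set (Fin n → ℝ) :=
  Set.univ.pi fun _ => Set.Icc (0 : ℝ) 1

/-- The unit square `[0,1]²` in `ℝ × ℝ`. -/
def unitSquare : Set (ℝ × ℝ) :=
  (Set.Icc (0 : ℝ) 1) ×ˢ (Set.Icc (0 : ℝ) 1)

/-!
The marginal of each edge `(i, j)`, `i ≠ j`, of the uniform measure on `[0,1]^n` is the uniform
measure on `[0,1]²`. By AM-GM, `∏_{e ∈ E} a_e ≤ (1/|E|) ∑_{e ∈ E} a_e^{|E|}` pointwise;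
integrating, each of the `|E|` terms on the right contributes `∫ h^{|E|}`. For a single edge the
left-hand side is exactly the integral of `h` against that marginal.
-/

open Set Finset ProbabilityTheory

theorem Real.prod_le_sum_pow_card_div_card {ι : Type*} {s : Finset ι} (hs : s.Nonempty)
    {a : ι → ℝ} (ha : ∀ i ∈ s, 0 ≤ a i) :
    ∏ i ∈ s, a i ≤ (∑ i ∈ s, a i ^ #s) / #s := by
  have hcard : (#s : ℝ) ≠ 0 := by positivity
  have amgm := Real.geom_mean_le_arith_mean_weighted s (fun _ => (#s : ℝ)⁻¹)
    (fun i => a i ^ #s) (fun _ _ => by positivity) (by simp [hcard])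
    (fun i hi => pow_nonneg (ha i hi) _)
  rwa [prod_congr rfl fun i hi => Real.pow_rpow_inv_natCast (ha i hi) (by simpa using hcard),
    ← mul_sum, inv_mul_eq_div] at amgm

namespace MeasureTheory

theorem MeasurePreserving.integral_comp_of_aestronglyMeasurable {α β G : Type*}
    [MeasurableSpace α] [MeasurableSpace β] [NormedAddCommGroup G] [NormedSpace ℝ G]
    {μ : Measure α} {ν : Measure β} {f : α → β} (hf : MeasurePreserving f μ ν) {g : β → G}
    (hg : AEStronglyMeasurable g ν) :
    ∫ x, g (f x) ∂μ = ∫ y, g y ∂ν := by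
  rw [← hf.map_eq] at hg ⊢
  exact (integral_map hf.measurable.aemeasurable hg).symm

theorem Measure.measurePreserving_eval_prod_eval {ι : Type*} [Fintype ι] {α : ι → Type*}
    [∀ i, MeasurableSpace (α i)] (μ : ∀ i, Measure (α i)) [∀ i, IsProbabilityMeasure (μ i)]
    {i j : ι} (hij : i ≠ j) :
    MeasurePreserving (fun x => (x i, x j)) (Measure.pi μ) ((μ i).prod (μ j)) := by
  refine ⟨by fun_prop, ?_⟩
  rw [IndepFun.map_prod_eq_prod_map_map]; rotate_right
  · exact iIndepFun_pi (X := fun _ => id) (fun _ => aemeasurable_id) |>.indepFun hij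
  · simp [(measurePreserving_eval μ _).map_eq]
  all_goals exact Measurable.aemeasurable (by fun_prop)

theorem integral_pi_prod_edges_le_integral_pow {ι α : Type*} [Fintype ι]
    [MeasurableSpace α] {μ : Measure α} [IsProbabilityMeasure μ] {E : Finset (ι × ι)}
    (hloop : ∀ e ∈ E, e.1 ≠ e.2) (hE : E.Nonempty) {f : α → α → ℝ} (hf₀ : ∀ x y, 0 ≤ f x y)
    (hf : Integrable (fun p : α × α => f p.1 p.2 ^ #E) (μ.prod μ)) :
    ∫ x, ∏ e ∈ E, f (x e.1) (x e.2) ∂Measure.pi (fun _ => μ) ≤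
      ∫ p, f p.1 p.2 ^ #E ∂μ.prod μ := by
  have hedge (e) (he : e ∈ E) :=
    Measure.measurePreserving_eval_prod_eval (fun _ => μ) (hloop e he)
  have hint (e) (he : e ∈ E) :
      Integrable (fun x : ι → α => f (x e.1) (x e.2) ^ #E) (Measure.pi fun _ => μ) :=
    (hedge e he).integrable_comp_of_integrable hf
  calc ∫ x, ∏ e ∈ E, f (x e.1) (x e.2) ∂Measure.pi (fun _ => μ)
      ≤ ∫ x, (∑ e ∈ E, f (x e.1) (x e.2) ^ #E) / #E ∂Measure.pi (fun _ => μ) :=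
        integral_mono_of_nonneg (.of_forall fun x => prod_nonneg fun _ _ => hf₀ _ _)
          ((integrable_finsetSum E hint).div_const _)
          (.of_forall fun x => Real.prod_le_sum_pow_card_div_card hE fun _ _ => hf₀ _ _)
    _ = (∑ e ∈ E, ∫ x, f (x e.1) (x e.2) ^ #E ∂Measure.pi (fun _ => μ)) / #E := by
        rw [integral_div, integral_finsetSum E hint]
    _ = (∑ _e ∈ E, ∫ p, f p.1 p.2 ^ #E ∂μ.prod μ) / #E := by
        congr 1
        refine sum_congr rfl fun e he => ?_
        exact (hedge e he).integral_comp_of_aestronglyMeasurable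
          (g := fun p : α × α => f p.1 p.2 ^ #E) hf.aestronglyMeasurable
    _ = ∫ p, f p.1 p.2 ^ #E ∂μ.prod μ := by
        rw [sum_const, nsmul_eq_mul, mul_div_cancel_left₀ _ (by positivity)]

end MeasureTheory

instance : IsProbabilityMeasure (volume.restrict (Icc (0 : ℝ) 1)) := ⟨by simp⟩

theorem volume_restrict_unitCube (n : ℕ) :
    volume.restrict (unitCube n) = Measure.pi fun _ => volume.restrict (Icc (0 : ℝ) 1) := by
  rw [unitCube, volume_pi, Measure.restrict_pi_pi]

theorem volume_restrict_unitSquare :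
    volume.restrict unitSquare =
      (volume.restrict (Icc (0 : ℝ) 1)).prod (volume.restrict (Icc 0 1)) := by
  rw [unitSquare, Measure.volume_eq_prod, Measure.prod_restrict]

/-- **Hölder bound on homomorphism densities.** For a finite directed graph `m` on
`{1,…,n}` with edge set `E` (no loops) having `e = |E| ≥ 1` edges, and a graphon
`h : [0,1]² → [0,1]`, the homomorphism density satisfies
`∫_{[0,1]^n} ∏_{(i,j)∈E} h(x_i,x_j) dx ≤ ∫_{[0,1]²} h(x,y)^e dx dy`,
with equality when `e = 1`. -/
theorem stmt_9 (n : ℕ) (E : Finset (Fin n × Fin n)) (hloop : ∀ e ∈ E, e.1 ≠ e.2)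
    (hE : 1 ≤ E.card) (h : ℝ → ℝ → ℝ)
    (hmeas : Measurable (Function.uncurry h))
    (hrange : ∀ x y, h x y ∈ Set.Icc (0 : ℝ) 1) :
    (∫ x in unitCube n, ∏ e ∈ E, h (x e.1) (x e.2)) ≤
      (∫ p in unitSquare, (h p.1 p.2) ^ E.card) ∧
    (E.card = 1 →
      (∫ x in unitCube n, ∏ e ∈ E, h (x e.1) (x e.2)) =
        ∫ p in unitSquare, (h p.1 p.2) ^ E.card) := by
  set μ : Measure ℝ := volume.restrict (Icc 0 1)
  rw [volume_restrict_unitCube, volume_restrict_unitSquare]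
  have hpow_int : Integrable (fun p : ℝ × ℝ => h p.1 p.2 ^ #E) (μ.prod μ) :=
    .of_bound (hmeas.pow_const _).aestronglyMeasurable 1 <| .of_forall fun p => by
      rw [Real.norm_of_nonneg (pow_nonneg (hrange _ _).1 _)]
      exact pow_le_one₀ (hrange _ _).1 (hrange _ _).2
  refine ⟨integral_pi_prod_edges_le_integral_pow hloop (card_pos.mp hE)
    (fun x y => (hrange x y).1) hpow_int, fun hcard => ?_⟩
  obtain ⟨e, rfl⟩ := card_eq_one.mp hcard
  simp only [Finset.prod_singleton, Finset.card_singleton, pow_one]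
  exact (Measure.measurePreserving_eval_prod_eval (fun _ => μ) (hloop e (mem_singleton_self e))
    ).integral_comp_of_aestronglyMeasurable (g := Function.uncurry h) hmeas.aestronglyMeasurable
end

section
/- There exists a constant C₀ > 0 such that for every η ∈ (0,1) and every directed graph G on N vertices with adjacency matrix B ∈ {0,1}^{N×N}, there exists a partition P of {1,...,N} into k ≤ exp(C₀/η²) classes such that, letting B_P be the matrix obtained by replacing each entry B_{ij} with the average of B over the block P(i) × P(j) containing (i,j), the cut norm satisfies (1/N²) · max_{S,T ⊆ {1,...,N}} | Σ_{i∈S, j∈T} (B_{ij} − (B_P)_{ij}) | ≤ η. -/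
/-- The block-averaged matrix `B_P`: entry `(i,j)` is the average of `B` over the block
`P(i) × P(j)` of the partition encoded by the class map `f` (the classes are the fibers
of `f`). -/
noncomputable def blockAvg {N k : ℕ} (f : Fin N → Fin k) (B : Fin N → Fin N → ℝ)
    (i j : Fin N) : ℝ :=
  (∑ i' ∈ Finset.univ.filter (fun x => f x = f i),
      ∑ j' ∈ Finset.univ.filter (fun x => f x = f j), B i' j') /
    (((Finset.univ.filter (fun x : Fin N => f x = f i)).card : ℝ) *
      ((Finset.univ.filter (fun x : Fin N => f x = f j)).card : ℝ))

/-!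
Energy increment (Frieze–Kannan). The energy `∑ (B_P)²` of a partition is at most `N²` when
`|B| ≤ 1`, and it increases along refinements by `‖B_Q - B_P‖²`, since `B ↦ B_P` is an orthogonal
projection. If `P` is not `η`-regular, a witness pair `S, T` refines each class into at most four
and raises the energy by more than `η² N²`. Hence after at most `⌈η⁻²⌉` refinements, starting
from the trivial partition, one reaches an `η`-regular partition with at most
`4 ^ ⌈η⁻²⌉ ≤ exp (4 / η²)` classes.
-/
namespace WeakRegularity

open Finset

variable {N k : ℕ}

lemma sum_div_card_fiber (f : Fin N → Fin k) (F : Fin N → ℝ) :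
    ∑ i, (∑ x ∈ {x | f x = f i}, F x) / (#{x | f x = f i} : ℝ) = ∑ i, F i := by
  rw [← sum_fiberwise' univ f (fun a => (∑ x ∈ {x | f x = a}, F x) / (#{x | f x = a} : ℝ)),
    ← sum_fiberwise univ f F]
  refine sum_congr rfl fun a _ => ?_
  rw [sum_const, nsmul_eq_mul]
  rcases eq_or_ne (#{x | f x = a} : ℝ) 0 with h | h
  · rw [h, zero_mul, eq_comm, sum_eq_zero]
    intro x hx
    simp_all
  · exact mul_div_cancel₀ _ h

lemma blockAvg_congr (f : Fin N → Fin k) (B : Fin N → Fin N → ℝ) {i i' j j' : Fin N}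
    (hi : f i = f i') (hj : f j = f j') : blockAvg f B i j = blockAvg f B i' j' := by
  simp only [blockAvg, hi, hj]

lemma blockAvg_mul_eq (f : Fin N → Fin k) (B h : Fin N → Fin N → ℝ)
    (hh : ∀ i i' j j', f i = f i' → f j = f j' → h i j = h i' j') (i j : Fin N) :
    blockAvg f B i j * h i j =
      (∑ x ∈ {x | f x = f i}, (∑ y ∈ {y | f y = f j}, B x y * h x y) / (#{y | f y = f j} : ℝ)) /
        (#{x | f x = f i} : ℝ) := by
  have hconst : ∀ x ∈ ({x | f x = f i} : Finset _), ∀ y ∈ ({y | f y = f j} : Finset _),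
      h x y = h i j := fun x hx y hy =>
    hh x i y j (mem_filter.1 hx).2 (mem_filter.1 hy).2
  rw [sum_congr rfl fun x hx => by rw [sum_congr rfl fun y hy => by rw [hconst x hx y hy]]]
  simp only [blockAvg, ← sum_mul, ← sum_div]
  ring

/-- `blockAvg f` is the orthogonal projection onto the matrices constant on the blocks of `f`. -/
lemma sum_blockAvg_mul (f : Fin N → Fin k) (B h : Fin N → Fin N → ℝ)
    (hh : ∀ i i' j j', f i = f i' → f j = f j' → h i j = h i' j') :
    ∑ i, ∑ j, blockAvg f B i j * h i j = ∑ i, ∑ j, B i j * h i j := by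
  simp_rw [blockAvg_mul_eq f B h hh]
  rw [sum_comm]
  simp_rw [sum_div_card_fiber]
  rw [sum_comm]
  simp_rw [sum_div_card_fiber]

lemma sum_sum_sub_sq_of_sum_sum_mul_eq {α β : Type*} [Fintype α] [Fintype β] (X Y : α → β → ℝ)
    (h : ∑ i, ∑ j, X i j * Y i j = ∑ i, ∑ j, Y i j * Y i j) :
    ∑ i, ∑ j, (X i j - Y i j) ^ 2 = ∑ i, ∑ j, X i j ^ 2 - ∑ i, ∑ j, Y i j ^ 2 := by
  have hexp : ∀ i j, (X i j - Y i j) ^ 2 =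
      X i j ^ 2 - Y i j ^ 2 - 2 * (X i j * Y i j - Y i j * Y i j) := fun _ _ => by ring
  simp only [hexp, sum_sub_distrib, ← mul_sum, h, sub_self, mul_zero, sub_zero]

lemma sq_sum_sum_le_card_mul_sum_sum_sq {α β : Type*} [Fintype α] [Fintype β]
    (S : Finset α) (T : Finset β) (D : α → β → ℝ) :
    (∑ i ∈ S, ∑ j ∈ T, D i j) ^ 2 ≤
      (Fintype.card α * Fintype.card β : ℝ) * ∑ i, ∑ j, D i j ^ 2 := by
  rw [← sum_product', ← sum_product' univ univ (fun i j => D i j ^ 2)]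
  calc (∑ p ∈ S ×ˢ T, D p.1 p.2) ^ 2 ≤ #(S ×ˢ T) * ∑ p ∈ S ×ˢ T, D p.1 p.2 ^ 2 :=
        sq_sum_le_card_mul_sum_sq
    _ ≤ Fintype.card α * Fintype.card β * ∑ p ∈ univ ×ˢ univ, D p.1 p.2 ^ 2 := by
        have hcard : #(S ×ˢ T) ≤ Fintype.card α * Fintype.card β :=
          card_product S T ▸ Nat.mul_le_mul (card_le_univ S) (card_le_univ T)
        gcongr ?_ * ?_
        · exact_mod_cast hcard
        · exact sum_le_sum_of_subset_of_nonneg (subset_univ _) fun _ _ _ => sq_nonneg _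

noncomputable def energy (f : Fin N → Fin k) (B : Fin N → Fin N → ℝ) : ℝ :=
  ∑ i, ∑ j, blockAvg f B i j ^ 2

lemma energy_nonneg (f : Fin N → Fin k) (B : Fin N → Fin N → ℝ) : 0 ≤ energy f B :=
  sum_nonneg fun _ _ => sum_nonneg fun _ _ => sq_nonneg _

lemma energy_le_sum_sum_sq (f : Fin N → Fin k) (B : Fin N → Fin N → ℝ) :
    energy f B ≤ ∑ i, ∑ j, B i j ^ 2 := by
  have hpyth := sum_sum_sub_sq_of_sum_sum_mul_eq B (blockAvg f B)
    (sum_blockAvg_mul f B (blockAvg f B) fun _ _ _ _ => blockAvg_congr f B).symm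
  have : 0 ≤ ∑ i, ∑ j, (B i j - blockAvg f B i j) ^ 2 :=
    sum_nonneg fun _ _ => sum_nonneg fun _ _ => sq_nonneg _
  rw [energy]
  linarith

lemma energy_le_sq (f : Fin N → Fin k) {B : Fin N → Fin N → ℝ} (hB : ∀ i j, |B i j| ≤ 1) :
    energy f B ≤ N ^ 2 :=
  calc energy f B ≤ ∑ i, ∑ j, B i j ^ 2 := energy_le_sum_sum_sq f B
    _ ≤ ∑ _i : Fin N, ∑ _j : Fin N, 1 := by
        gcongr with i _ j _
        exact (sq_le_one_iff_abs_le_one _).2 (hB i j)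
    _ = N ^ 2 := by simp [sq]

section Refinement

variable {m : ℕ} {f : Fin N → Fin k} {g : Fin N → Fin m}

lemma energy_sub_energy_of_refines (B : Fin N → Fin N → ℝ) (hgf : ∀ x y, g x = g y → f x = f y) :
    energy g B - energy f B = ∑ i, ∑ j, (blockAvg g B i j - blockAvg f B i j) ^ 2 := by
  have hf := sum_blockAvg_mul f B (blockAvg f B) fun _ _ _ _ => blockAvg_congr f B
  have hg := sum_blockAvg_mul g B (blockAvg f B) fun _ _ _ _ hi hj =>
    blockAvg_congr f B (hgf _ _ hi) (hgf _ _ hj)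
  rw [sum_sum_sub_sq_of_sum_sum_mul_eq _ _ (hg.trans hf.symm), energy, energy]

lemma sum_sum_blockAvg_of_refines (B : Fin N → Fin N → ℝ) {S T : Finset (Fin N)}
    (hS : ∀ x y, g x = g y → (x ∈ S ↔ y ∈ S)) (hT : ∀ x y, g x = g y → (x ∈ T ↔ y ∈ T)) :
    ∑ i ∈ S, ∑ j ∈ T, blockAvg g B i j = ∑ i ∈ S, ∑ j ∈ T, B i j := by
  have := sum_blockAvg_mul g B (fun i j => if i ∈ S ∧ j ∈ T then 1 else 0)
    fun i i' j j' hi hj => by simp only [hS i i' hi, hT j j' hj]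
  simpa [mul_ite, ite_and, sum_ite_mem] using this

end Refinement

lemma exists_refinement (f : Fin N → Fin k) (S T : Finset (Fin N)) :
    ∃ g : Fin N → Fin (4 * k), ∀ x y, g x = g y →
      f x = f y ∧ (x ∈ S ↔ y ∈ S) ∧ (x ∈ T ↔ y ∈ T) := by
  let e : Fin k × Bool × Bool ≃ Fin (4 * k) :=
    Fintype.equivFinOfCardEq (by simp [Fintype.card_prod, mul_comm])
  refine ⟨fun x => e (f x, decide (x ∈ S), decide (x ∈ T)), fun x y hxy => ?_⟩
  simpa [Prod.ext_iff] using e.injective hxy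

def IsWeakRegular (η : ℝ) (B : Fin N → Fin N → ℝ) (f : Fin N → Fin k) : Prop :=
  ∀ S T : Finset (Fin N), |∑ i ∈ S, ∑ j ∈ T, (B i j - blockAvg f B i j)| ≤ η * N ^ 2

/-- Refining by a witness pair `S, T` keeps the mass of `B` on `S × T` in the new block averages,
so the cut discrepancy is a discrepancy of `blockAvg g B - blockAvg f B`, and Cauchy–Schwarz
turns it into energy. -/
lemma exists_energy_add_lt_of_not_isWeakRegular {η : ℝ} (hη : 0 ≤ η) {B : Fin N → Fin N → ℝ}
    {f : Fin N → Fin k} (hf : ¬ IsWeakRegular η B f) :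
    ∃ g : Fin N → Fin (4 * k), energy f B + η ^ 2 * N ^ 2 < energy g B := by
  obtain ⟨S, T, hST⟩ : ∃ S T : Finset (Fin N),
      η * N ^ 2 < |∑ i ∈ S, ∑ j ∈ T, (B i j - blockAvg f B i j)| := by
    simpa [IsWeakRegular] using hf
  obtain ⟨g, hg⟩ := exists_refinement f S T
  refine ⟨g, ?_⟩
  have hdiff := energy_sub_energy_of_refines B fun x y h => (hg x y h).1
  have hrect : ∑ i ∈ S, ∑ j ∈ T, (B i j - blockAvg f B i j) =
      ∑ i ∈ S, ∑ j ∈ T, (blockAvg g B i j - blockAvg f B i j) := by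
    simp only [sum_sub_distrib]
    rw [sum_sum_blockAvg_of_refines B (fun x y h => (hg x y h).2.1) fun x y h => (hg x y h).2.2]
  have hCS := sq_sum_sum_le_card_mul_sum_sum_sq S T fun i j => blockAvg g B i j - blockAvg f B i j
  simp only [Fintype.card_fin, ← hrect, ← hdiff] at hCS
  have hsq : (η * N ^ 2) ^ 2 < (∑ i ∈ S, ∑ j ∈ T, (B i j - blockAvg f B i j)) ^ 2 := by
    simpa only [sq_abs] using pow_lt_pow_left₀ hST (by positivity) two_ne_zero
  have : (N : ℝ) ^ 2 * (η ^ 2 * N ^ 2) < N ^ 2 * (energy g B - energy f B) := by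
    nlinarith
  linarith [lt_of_mul_lt_mul_left this (sq_nonneg (N : ℝ))]

lemma exists_isWeakRegular_or_le_energy {η : ℝ} (hη : 0 ≤ η) (B : Fin N → Fin N → ℝ) :
    ∀ t : ℕ, ∃ k ≤ 4 ^ t, ∃ f : Fin N → Fin k,
      IsWeakRegular η B f ∨ t * (η ^ 2 * N ^ 2) ≤ energy f B
  | 0 => ⟨1, le_rfl, fun _ => 0, Or.inr (by simpa using energy_nonneg _ B)⟩
  | t + 1 => by
    obtain ⟨k, hk, f, hf⟩ := exists_isWeakRegular_or_le_energy hη B t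
    by_cases hreg : IsWeakRegular η B f
    · exact ⟨k, hk.trans (Nat.pow_le_pow_right (by norm_num) t.le_succ), f, Or.inl hreg⟩
    have henergy := hf.resolve_left hreg
    obtain ⟨g, hg⟩ := exists_energy_add_lt_of_not_isWeakRegular hη hreg
    refine ⟨4 * k, by rw [pow_succ']; omega, g, Or.inr ?_⟩
    push_cast
    linarith

/-- After `⌈η⁻²⌉` increments the energy would exceed its a priori bound `N²`. -/
theorem exists_isWeakRegular {η : ℝ} (hη : 0 < η) {B : Fin N → Fin N → ℝ}
    (hB : ∀ i j, |B i j| ≤ 1) :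
    ∃ k ≤ 4 ^ ⌈1 / η ^ 2⌉₊, ∃ f : Fin N → Fin k, IsWeakRegular η B f := by
  obtain ⟨k, hk, f, hf⟩ := exists_isWeakRegular_or_le_energy hη.le B ⌈1 / η ^ 2⌉₊
  refine ⟨k, hk, f, hf.elim id fun henergy => ?_⟩
  by_contra hreg
  obtain ⟨g, hg⟩ := exists_energy_add_lt_of_not_isWeakRegular hη.le hreg
  have hceil : 1 ≤ (⌈1 / η ^ 2⌉₊ : ℝ) * η ^ 2 := by
    rw [← div_le_iff₀ (by positivity)]
    exact Nat.le_ceil _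
  have hgrowth : (N : ℝ) ^ 2 ≤ ⌈1 / η ^ 2⌉₊ * (η ^ 2 * N ^ 2) := by
    nlinarith [sq_nonneg (N : ℝ)]
  have hincrement : 0 ≤ η ^ 2 * N ^ 2 := by positivity
  linarith [energy_le_sq g hB]

lemma four_pow_ceil_le_exp {x : ℝ} (hx : 1 ≤ x) : (4 : ℝ) ^ ⌈x⌉₊ ≤ Real.exp (4 * x) := by
  have h4 : (4 : ℝ) ≤ Real.exp 2 := by
    have h2 : (2 : ℝ) ≤ Real.exp 1 := by linarith [Real.add_one_le_exp 1]
    calc (4 : ℝ) = 2 ^ 2 := by norm_num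
      _ ≤ Real.exp 1 ^ 2 := by gcongr
      _ = Real.exp 2 := by rw [← Real.exp_nat_mul]; norm_num
  have hceil : (⌈x⌉₊ : ℝ) ≤ 2 * x := by linarith [Nat.ceil_lt_add_one (zero_le_one.trans hx)]
  calc (4 : ℝ) ^ ⌈x⌉₊ ≤ Real.exp 2 ^ ⌈x⌉₊ := by gcongr
    _ = Real.exp (⌈x⌉₊ * 2) := (Real.exp_nat_mul 2 _).symm
    _ ≤ Real.exp (4 * x) := Real.exp_le_exp.2 (by linarith)

end WeakRegularity

open WeakRegularity in
/-- **Lemma 9 (weak regularity lemma for directed graphs).** There is a constant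
`C₀ > 0` such that for every `η ∈ (0,1)` and every directed graph on `N` vertices with
adjacency matrix `B ∈ {0,1}^{N×N}`, there is a partition of `{1,…,N}` into
`k ≤ exp(C₀/η²)` classes such that the block-averaged matrix `B_P` satisfies the cut
norm bound `(1/N²) max_{S,T} |∑_{i∈S,j∈T} (B_{ij} − (B_P)_{ij})| ≤ η`. -/
theorem stmt_16 :
    ∃ C₀ : ℝ, 0 < C₀ ∧
      ∀ η : ℝ, η ∈ Set.Ioo (0 : ℝ) 1 →
        ∀ (N : ℕ) (B : Fin N → Fin N → ℝ),
          (∀ i j, B i j = 0 ∨ B i j = 1) →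
          ∃ (k : ℕ) (f : Fin N → Fin k),
            (k : ℝ) ≤ Real.exp (C₀ / η ^ 2) ∧
            ∀ S T : Finset (Fin N),
              |∑ i ∈ S, ∑ j ∈ T, (B i j - blockAvg f B i j)| ≤ η * (N : ℝ) ^ 2 := by
  refine ⟨4, by norm_num, fun η ⟨hη0, hη1⟩ N B hB => ?_⟩
  obtain ⟨k, hk, f, hf⟩ := exists_isWeakRegular hη0 (B := B) fun i j => by
    rcases hB i j with h | h <;> simp [h]
  refine ⟨k, f, ?_, hf⟩
  have hη : 1 ≤ 1 / η ^ 2 := by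
    rw [le_div_iff₀ (by positivity), one_mul]
    exact pow_le_one₀ hη0.le hη1.le
  calc (k : ℝ) ≤ 4 ^ ⌈1 / η ^ 2⌉₊ := by exact_mod_cast hk
    _ ≤ Real.exp (4 * (1 / η ^ 2)) := four_pow_ceil_le_exp hη
    _ = Real.exp (4 / η ^ 2) := by rw [mul_one_div]
end

section
/- Let Θ be a finite set and c, c' : [0,1] → Θ measurable, with color vectors w_θ = λ(c^{−1}(θ)) and w'_θ = λ(c'^{−1}(θ)), where λ is Lebesgue measure. Then the infimum over measurable measure-preserving bijections σ : [0,1] → [0,1] of λ({x ∈ [0,1] : c(x) ≠ c'(σ(x))}) equals (1/2) Σ_{θ∈Θ} |w_θ − w'_θ|. In particular, the coloring distance δ_Θ between the equivalence classes of c and c' under measure-preserving bijections depends only on the color vectors w and w', and equals Σ_θ max(w_θ − w'_θ, 0). -/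
/-!
For every measure-preserving `σ` the fibres `c⁻¹{θ}` and `(c' ∘ σ)⁻¹{θ}` agree off the
disagreement set `D = {c ≠ c' ∘ σ}`, so `∑ θ, |w θ - w' θ| ≤ 2 λ(D)`.

Conversely, by inner regularity the fibres of `c` and of `c'` contain compact sets of almost full
measure; compact sets of different colours are a positive distance apart, so on a fine enough grid
`[k/N, (k+1)/N)` both colourings are, up to a set of small measure, constant on cells. Matching
cells of equal colour as far as the colour counts allow leaves a proportion
`∑ θ, max (w θ - w' θ) 0` of mismatched cells, up to the approximation error, and the permutation
of cells realising the matching induces a measure-preserving interval exchange of `[0,1]`.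
-/

open MeasureTheory Set Filter Topology
open scoped ENNReal Finset

namespace ColoringDistance

theorem half_mul_sum_abs_sub_eq_sum_max {ι : Type*} (s : Finset ι) {a b : ι → ℝ}
    (h : ∑ i ∈ s, a i = ∑ i ∈ s, b i) :
    1 / 2 * ∑ i ∈ s, |a i - b i| = ∑ i ∈ s, max (a i - b i) 0 := by
  have habs : ∀ t : ℝ, |t| = 2 * max t 0 - t := fun t => by
    rcases le_total 0 t with ht | ht
    · rw [abs_of_nonneg ht, max_eq_left ht]; ring
    · rw [abs_of_nonpos ht, max_eq_right ht]; ring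
  rw [Finset.sum_congr rfl fun i _ => habs (a i - b i), Finset.sum_sub_distrib, ← Finset.mul_sum,
    Finset.sum_sub_distrib, h]
  ring

section Colorings

variable {X Θ : Type*} [MeasurableSpace X] {μ : Measure X} [IsFiniteMeasure μ]

theorem measureReal_setOf_ne_le_add (f g h : X → Θ) :
    μ.real {x | f x ≠ h x} ≤ μ.real {x | f x ≠ g x} + μ.real {x | g x ≠ h x} := by
  refine (measureReal_mono fun x (hx : f x ≠ h x) => ?_).trans (measureReal_union_le _ _)
  by_contra hfg
  simp only [mem_union, mem_ofPred_eq, not_or, not_not] at hfg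
  exact hx (hfg.1.trans hfg.2)

variable [Fintype Θ] [MeasurableSpace Θ] [MeasurableSingletonClass Θ]

omit [IsFiniteMeasure μ] in
theorem measurableSet_setOf_ne {f g : X → Θ} (hf : Measurable f) (hg : Measurable g) :
    MeasurableSet {x | f x ≠ g x} :=
  (measurableSet_eq_fun hf hg).compl

theorem sum_abs_measureReal_preimage_sub_le {f g : X → Θ} (hf : Measurable f)
    (hg : Measurable g) :
    ∑ θ, |μ.real (f ⁻¹' {θ}) - μ.real (g ⁻¹' {θ})| ≤ 2 * μ.real {x | f x ≠ g x} := by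
  set D := {x | f x ≠ g x}
  have hD : MeasurableSet D := measurableSet_setOf_ne hf hg
  -- off `D` the fibres of `f` and `g` coincide, so their difference is carried by `D`
  have hfibre : ∀ θ, |μ.real (f ⁻¹' {θ}) - μ.real (g ⁻¹' {θ})|
      ≤ μ.real (f ⁻¹' {θ} ∩ D) + μ.real (g ⁻¹' {θ} ∩ D) := by
    intro θ
    have hdiff : f ⁻¹' {θ} \ D = g ⁻¹' {θ} \ D := by
      ext x
      simp only [Set.mem_sdiff, mem_preimage, mem_singleton_iff, D, mem_ofPred_eq, not_not]
      grind
    rw [← measureReal_inter_add_sdiff (s := f ⁻¹' {θ}) hD,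
      ← measureReal_inter_add_sdiff (s := g ⁻¹' {θ}) hD,
      hdiff, abs_le]
    constructor <;> linarith [measureReal_nonneg (μ := μ) (s := f ⁻¹' {θ} ∩ D),
      measureReal_nonneg (μ := μ) (s := g ⁻¹' {θ} ∩ D)]
  have hpartition : ∀ k : X → Θ, Measurable k → ∑ θ, μ.real (k ⁻¹' {θ} ∩ D) = μ.real D := by
    intro k hk
    simp_rw [← measureReal_restrict_apply (hk (measurableSet_singleton _))]
    rw [sum_measureReal_preimage_singleton _ fun θ _ => hk (measurableSet_singleton θ),
      Finset.coe_univ, preimage_univ, measureReal_restrict_apply_univ]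
  calc ∑ θ, |μ.real (f ⁻¹' {θ}) - μ.real (g ⁻¹' {θ})|
      ≤ ∑ θ, (μ.real (f ⁻¹' {θ} ∩ D) + μ.real (g ⁻¹' {θ} ∩ D)) :=
        Finset.sum_le_sum fun θ _ => hfibre θ
    _ = 2 * μ.real D := by rw [Finset.sum_add_distrib, hpartition f hf, hpartition g hg]; ring

theorem half_mul_sum_abs_sub_le_measureReal_ne {Y : Type*} [MeasurableSpace Y] {ν : Measure Y}
    {c : X → Θ} {c' : Y → Θ} (hc : Measurable c) (hc' : Measurable c') {σ : X → Y}
    (hσ : MeasurePreserving σ μ ν) :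
    1 / 2 * ∑ θ, |μ.real (c ⁻¹' {θ}) - ν.real (c' ⁻¹' {θ})| ≤ μ.real {x | c x ≠ c' (σ x)} := by
  have h := sum_abs_measureReal_preimage_sub_le (μ := μ) hc (hc'.comp hσ.measurable)
  simp only [preimage_comp, Function.comp_apply,
    hσ.measureReal_preimage (hc' (measurableSet_singleton _)).nullMeasurableSet] at h
  linarith

theorem sum_max_sub_le_add {f g f' g' : X → Θ} (hf : Measurable f) (hg : Measurable g)
    (hf' : Measurable f') (hg' : Measurable g') :
    ∑ θ, max (μ.real (f' ⁻¹' {θ}) - μ.real (g' ⁻¹' {θ})) 0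
      ≤ ∑ θ, max (μ.real (f ⁻¹' {θ}) - μ.real (g ⁻¹' {θ})) 0
        + 2 * μ.real {x | f x ≠ f' x} + 2 * μ.real {x | g x ≠ g' x} := by
  have hpt : ∀ a b a' b' : ℝ, max (a' - b') 0 ≤ max (a - b) 0 + |a - a'| + |b - b'| :=
    fun a b a' b' => by
      apply max_le
      · linarith [le_max_left (a - b) 0, neg_abs_le (a - a'), le_abs_self (b - b')]
      · positivity
  calc _ ≤ ∑ θ, (max (μ.real (f ⁻¹' {θ}) - μ.real (g ⁻¹' {θ})) 0
          + |μ.real (f ⁻¹' {θ}) - μ.real (f' ⁻¹' {θ})|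
          + |μ.real (g ⁻¹' {θ}) - μ.real (g' ⁻¹' {θ})|) :=
        Finset.sum_le_sum fun θ _ => hpt _ _ _ _
    _ ≤ _ := by
        rw [Finset.sum_add_distrib, Finset.sum_add_distrib]
        linarith [sum_abs_measureReal_preimage_sub_le (μ := μ) hf hf',
          sum_abs_measureReal_preimage_sub_le (μ := μ) hg hg']

end Colorings

section Matching

variable {α β Θ : Type*} [DecidableEq Θ]

theorem exists_equiv_comp_eq_of_card_fiber_eq [Fintype α] [Fintype β] {f : α → Θ} {g : β → Θ}
    (h : ∀ θ, Fintype.card {a // f a = θ} = Fintype.card {b // g b = θ}) :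
    ∃ e : α ≃ β, ∀ a, g (e a) = f a :=
  ⟨(Equiv.sigmaFiberEquiv f).symm.trans ((Equiv.sigmaCongrRight fun θ =>
      Fintype.equivOfCardEq (h θ)).trans (Equiv.sigmaFiberEquiv g)),
    fun a => (Fintype.equivOfCardEq (h (f a)) ⟨a, rfl⟩).2⟩

theorem card_fiber_subtype_mem [Fintype α] [DecidableEq α] {f : α → Θ} {A : Θ → Finset α}
    (hA : ∀ θ, ∀ k ∈ A θ, f k = θ) (θ : Θ) :
    Fintype.card {x : {k // k ∈ A (f k)} // f x = θ} = #(A θ) := by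
  rw [Fintype.card_congr (Equiv.subtypeSubtypeEquivSubtypeInter _ (f · = θ)),
    Fintype.card_subtype]
  congr 1
  ext k
  simp only [Finset.mem_filter, Finset.mem_univ, true_and]
  constructor
  · rintro ⟨hk, rfl⟩; exact hk
  · intro hk; obtain rfl := hA θ k hk; exact ⟨hk, rfl⟩

theorem card_subtype_mem_eq_sum [Fintype α] [DecidableEq α] [Fintype Θ] {f : α → Θ}
    {A : Θ → Finset α} (hA : ∀ θ, ∀ k ∈ A θ, f k = θ) :
    Fintype.card {k // k ∈ A (f k)} = ∑ θ, #(A θ) := by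
  rw [← Fintype.card_congr (Equiv.sigmaFiberEquiv fun x : {k // k ∈ A (f k)} => f x),
    Fintype.card_sigma]
  exact Finset.sum_congr rfl fun θ _ => card_fiber_subtype_mem hA θ

/-- Match, colour by colour, as many `f`-cells to `g`-cells as possible and pair off the rest
arbitrarily. -/
theorem exists_perm_card_ne_le [Fintype α] [Fintype Θ] (f g : α → Θ) :
    ∃ e : Equiv.Perm α,
      #{k | f k ≠ g (e k)} ≤ ∑ θ, (#{k | f k = θ} - #{k | g k = θ}) := by
  classical
  choose A hAf hAcard using fun θ =>
    Finset.exists_subset_card_eq (min_le_left #{k | f k = θ} #{k | g k = θ})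
  choose B hBg hBcard using fun θ =>
    Finset.exists_subset_card_eq (min_le_right #{k | f k = θ} #{k | g k = θ})
  have hAf' : ∀ θ, ∀ k ∈ A θ, f k = θ := fun θ k hk => (Finset.mem_filter.1 (hAf θ hk)).2
  have hBg' : ∀ θ, ∀ k ∈ B θ, g k = θ := fun θ k hk => (Finset.mem_filter.1 (hBg θ hk)).2
  set p : α → Prop := fun k => k ∈ A (f k)
  set q : α → Prop := fun k => k ∈ B (g k)
  obtain ⟨e₁, he₁⟩ := exists_equiv_comp_eq_of_card_fiber_eq (f := fun x : {k // p k} => f x)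
    (g := fun y : {k // q k} => g y) fun θ => by
      rw [card_fiber_subtype_mem hAf', card_fiber_subtype_mem hBg', hAcard, hBcard]
  have hcompl : Fintype.card {k // ¬p k} = Fintype.card {k // ¬q k} := by
    rw [Fintype.card_subtype_compl, Fintype.card_subtype_compl, card_subtype_mem_eq_sum hAf',
      card_subtype_mem_eq_sum hBg']
    simp only [hAcard, hBcard]
  let e : Equiv.Perm α := (Equiv.sumCompl p).symm.trans
    ((e₁.sumCongr (Fintype.equivOfCardEq hcompl)).trans (Equiv.sumCompl q))
  refine ⟨e, ?_⟩
  have hmatch : ∀ k, p k → g (e k) = f k := fun k hk => by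
    simp [e, Equiv.sumCompl_symm_apply_of_pos hk, he₁]
  calc #{k | f k ≠ g (e k)}
      ≤ #{k | ¬p k} := Finset.card_le_card fun k => by
        simp only [Finset.mem_filter, Finset.mem_univ, true_and]
        exact mt fun hk => (hmatch k hk).symm
    _ = ∑ θ, #(({k | f k = θ} : Finset α) \ A θ) := by
        rw [Finset.card_eq_sum_card_fiberwise (f := f) (t := Finset.univ) (by simp)]
        refine Finset.sum_congr rfl fun θ _ => congrArg _ ?_
        ext k
        simp only [Finset.mem_filter, Finset.mem_univ, true_and, Finset.mem_sdiff, p]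
        constructor
        · rintro ⟨hk, rfl⟩; exact ⟨rfl, hk⟩
        · rintro ⟨rfl, hk⟩; exact ⟨hk, rfl⟩
    _ = ∑ θ, (#{k | f k = θ} - #{k | g k = θ}) := by
        refine Finset.sum_congr rfl fun θ _ => ?_
        rw [Finset.card_sdiff_of_subset (hAf θ), hAcard, tsub_min]

theorem exists_perm_card_filter_ne_le [DecidableEq α] [Fintype Θ] (s : Finset α) (f g : α → Θ) :
    ∃ e : Equiv.Perm α, (∀ k ∉ s, e k = k) ∧
      #{k ∈ s | f k ≠ g (e k)} ≤ ∑ θ, (#{k ∈ s | f k = θ} - #{k ∈ s | g k = θ}) := by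
  obtain ⟨e, he⟩ := exists_perm_card_ne_le (fun k : s => f k) (fun k : s => g k)
  have hcard : ∀ (P : α → Prop) [DecidablePred P], #{k : s | P k} = #{k ∈ s | P k} := by
    intro P _
    rw [Finset.univ_eq_attach, Finset.filter_attach, Finset.card_map, Finset.card_attach]
  refine ⟨Equiv.Perm.ofSubtype e, fun k hk => Equiv.Perm.ofSubtype_apply_of_not_mem e hk, ?_⟩
  simpa only [← hcard, Equiv.Perm.ofSubtype_apply_coe] using he

end Matching

noncomputable section Grid

def gridIndex (N : ℕ) (x : ℝ) : ℤ := ⌊N * x⌋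

def gridCells (N : ℕ) : Finset ℤ := Finset.Ico 0 N

/-- Translates the cell `[k/N, (k+1)/N)` onto the cell `[e k/N, (e k+1)/N)`. -/
def intervalExchange (N : ℕ) (e : ℤ → ℤ) (x : ℝ) : ℝ :=
  x + ((e (gridIndex N x) - gridIndex N x : ℤ) : ℝ) / N

variable {N : ℕ}

theorem measurable_gridIndex : Measurable (gridIndex N) :=
  (measurable_const.mul measurable_id).floor

theorem measurable_intervalExchange (e : ℤ → ℤ) : Measurable (intervalExchange N e) :=
  measurable_id.add (((Measurable.of_discrete (f := fun k : ℤ => ((e k - k : ℤ) : ℝ))).comp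
    measurable_gridIndex).div_const _)

theorem gridIndex_add_intCast_div (hN : 0 < N) (x : ℝ) (m : ℤ) :
    gridIndex N (x + m / N) = gridIndex N x + m := by
  have hN' : (N : ℝ) ≠ 0 := by positivity
  rw [gridIndex, mul_add, mul_div_cancel₀ _ hN', Int.floor_add_intCast, gridIndex]

theorem gridIndex_intervalExchange (hN : 0 < N) (e : ℤ → ℤ) (x : ℝ) :
    gridIndex N (intervalExchange N e x) = e (gridIndex N x) := by
  rw [intervalExchange, gridIndex_add_intCast_div hN]
  ring

theorem intervalExchange_symm_intervalExchange (hN : 0 < N) (e : Equiv.Perm ℤ) (x : ℝ) :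
    intervalExchange N e.symm (intervalExchange N e x) = x := by
  rw [intervalExchange, gridIndex_intervalExchange hN, intervalExchange, Equiv.symm_apply_apply]
  push_cast
  ring

theorem preimage_gridIndex_singleton (hN : 0 < N) (k : ℤ) :
    gridIndex N ⁻¹' {k} = Ico (k / N : ℝ) ((k + 1) / N) := by
  have hN' : (0 : ℝ) < N := by exact_mod_cast hN
  ext x
  rw [mem_preimage, mem_singleton_iff, gridIndex, Int.floor_eq_iff, mem_Ico, div_le_iff₀ hN',
    lt_div_iff₀ hN', mul_comm x]

theorem volume_preimage_gridIndex_singleton (hN : 0 < N) (k : ℤ) :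
    volume (gridIndex N ⁻¹' {k}) = ENNReal.ofReal (1 / N) := by
  rw [preimage_gridIndex_singleton hN, Real.volume_Ico]
  congr 1
  ring

theorem dist_lt_of_gridIndex_eq (hN : 0 < N) {x y : ℝ} (h : gridIndex N x = gridIndex N y) :
    dist x y < 1 / N := by
  have hx : x ∈ gridIndex N ⁻¹' {gridIndex N x} := rfl
  have hy : y ∈ gridIndex N ⁻¹' {gridIndex N x} := h.symm
  rw [preimage_gridIndex_singleton hN] at hx hy
  rw [Real.dist_eq, abs_sub_lt_iff]
  constructor <;> linarith [hx.1, hx.2, hy.1, hy.2, show ((gridIndex N x + 1 : ℝ) / N)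
    = gridIndex N x / N + 1 / N by ring]

theorem mem_Ico_zero_one_iff (hN : 0 < N) {x : ℝ} :
    x ∈ Ico (0 : ℝ) 1 ↔ gridIndex N x ∈ gridCells N := by
  have hN' : (0 : ℝ) < N := by exact_mod_cast hN
  rw [gridCells, Finset.mem_Ico, gridIndex, Int.floor_nonneg, Int.floor_lt, mem_Ico,
    Int.cast_natCast]
  constructor
  · rintro ⟨h0, h1⟩; exact ⟨by positivity, by nlinarith⟩
  · rintro ⟨h0, h1⟩
    exact ⟨nonneg_of_mul_nonneg_right (by linarith) hN', by nlinarith⟩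

theorem restrict_Icc_apply_eq_sum (hN : 0 < N) {B : Set ℝ} (hB : MeasurableSet B) :
    volume.restrict (Icc (0 : ℝ) 1) B = ∑ k ∈ gridCells N, volume (gridIndex N ⁻¹' {k} ∩ B) := by
  have hcells : Ico (0 : ℝ) 1 = gridIndex N ⁻¹' ↑(gridCells N) := by
    ext x; exact mem_Ico_zero_one_iff hN
  rw [← Measure.restrict_congr_set Ico_ae_eq_Icc, Measure.restrict_apply hB, inter_comm, hcells,
    ← Measure.restrict_apply (measurable_gridIndex (by trivial)),
    ← sum_measure_preimage_singleton _ fun k _ => measurable_gridIndex (measurableSet_singleton k)]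
  exact Finset.sum_congr rfl fun k _ => Measure.restrict_apply (measurable_gridIndex (by trivial))

variable {e : Equiv.Perm ℤ}

theorem volume_preimage_gridIndex_inter_preimage_intervalExchange (hN : 0 < N) (k : ℤ)
    (S : Set ℝ) :
    volume (gridIndex N ⁻¹' {k} ∩ intervalExchange N e ⁻¹' S)
      = volume (gridIndex N ⁻¹' {e k} ∩ S) := by
  have htranslate : gridIndex N ⁻¹' {k} ∩ intervalExchange N e ⁻¹' S
      = (· + ((e k - k : ℤ) : ℝ) / N) ⁻¹' (gridIndex N ⁻¹' {e k} ∩ S) := by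
    ext x
    simp only [mem_inter_iff, mem_preimage, mem_singleton_iff, gridIndex_add_intCast_div hN]
    constructor
    · rintro ⟨rfl, hS⟩; exact ⟨by ring, hS⟩
    · rintro ⟨hk, hS⟩
      obtain rfl : gridIndex N x = k := by linarith
      exact ⟨rfl, hS⟩
  rw [htranslate, measure_preimage_add_right]

theorem mapsTo_intervalExchange (hN : 0 < N) (he : ∀ k ∉ gridCells N, e k = k) :
    MapsTo (intervalExchange N e) (Icc 0 1) (Icc 0 1) := by
  intro x hx
  by_cases hk : gridIndex N x ∈ gridCells N
  · have hek : e (gridIndex N x) ∈ gridCells N := by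
      by_contra hek
      exact hek (by rwa [e.injective (he _ hek)])
    rw [← gridIndex_intervalExchange hN (⇑e) x, ← mem_Ico_zero_one_iff hN] at hek
    exact Ico_subset_Icc_self hek
  · rwa [intervalExchange, he _ hk, sub_self, Int.cast_zero, zero_div, add_zero]

theorem bijOn_intervalExchange (hN : 0 < N) (he : ∀ k ∉ gridCells N, e k = k) :
    BijOn (intervalExchange N e) (Icc 0 1) (Icc 0 1) := by
  have he' : ∀ k ∉ gridCells N, e.symm k = k := fun k hk => e.symm_apply_eq.2 (he k hk).symm
  refine InvOn.bijOn ⟨fun x _ => intervalExchange_symm_intervalExchange hN e x, fun x _ => ?_⟩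
    (mapsTo_intervalExchange hN he) (mapsTo_intervalExchange hN he')
  simpa using intervalExchange_symm_intervalExchange hN e.symm x

theorem measurePreserving_intervalExchange (hN : 0 < N) (he : ∀ k ∉ gridCells N, e k = k) :
    MeasurePreserving (intervalExchange N e) (volume.restrict (Icc 0 1))
      (volume.restrict (Icc 0 1)) := by
  refine ⟨measurable_intervalExchange e, Measure.ext fun S hS => ?_⟩
  rw [Measure.map_apply (measurable_intervalExchange e) hS,
    restrict_Icc_apply_eq_sum hN (measurable_intervalExchange e hS),
    restrict_Icc_apply_eq_sum hN hS]
  simp_rw [volume_preimage_gridIndex_inter_preimage_intervalExchange hN]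
  exact e.sum_comp _ (fun k => volume (gridIndex N ⁻¹' {k} ∩ S))
    fun k hk => by_contra fun h => hk (he k h)

theorem measureReal_preimage_gridIndex (hN : 0 < N) (P : Set ℤ) [DecidablePred (· ∈ P)] :
    (volume.restrict (Icc (0 : ℝ) 1)).real (gridIndex N ⁻¹' P)
      = #{k ∈ gridCells N | k ∈ P} / N := by
  have hcell : ∀ k, volume (gridIndex N ⁻¹' {k} ∩ gridIndex N ⁻¹' P)
      = if k ∈ P then ENNReal.ofReal (1 / N) else 0 := by
    intro k
    split_ifs with hk
    · rw [inter_eq_left.2 (preimage_mono (singleton_subset_iff.2 hk)),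
        volume_preimage_gridIndex_singleton hN]
    · rw [← preimage_inter, singleton_inter_eq_empty.2 hk, preimage_empty, measure_empty]
  rw [measureReal_def, restrict_Icc_apply_eq_sum hN (measurable_gridIndex (by trivial)),
    Finset.sum_congr rfl fun k _ => hcell k, ← Finset.sum_filter, Finset.sum_const, nsmul_eq_mul,
    ENNReal.toReal_mul, ENNReal.toReal_ofReal (by positivity), ENNReal.toReal_natCast, mul_one_div]

theorem exists_perm_measureReal_ne_le {Θ : Type*} [Fintype Θ] (hN : 0 < N) (d d' : ℤ → Θ) :
    ∃ e : Equiv.Perm ℤ, (∀ k ∉ gridCells N, e k = k) ∧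
      (volume.restrict (Icc (0 : ℝ) 1)).real {x | (d ∘ gridIndex N) x ≠ (d' ∘ e ∘ gridIndex N) x}
        ≤ ∑ θ, max ((volume.restrict (Icc (0 : ℝ) 1)).real ((d ∘ gridIndex N) ⁻¹' {θ})
          - (volume.restrict (Icc (0 : ℝ) 1)).real ((d' ∘ gridIndex N) ⁻¹' {θ})) 0 := by
  classical
  obtain ⟨e, he, hcard⟩ := exists_perm_card_filter_ne_le (gridCells N) d d'
  refine ⟨e, he, ?_⟩
  have hterm : ∀ a b : ℕ, ((a - b : ℕ) : ℝ) / N ≤ max ((a : ℝ) / N - b / N) 0 := by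
    intro a b
    rcases le_total b a with h | h
    · rw [Nat.cast_sub h, sub_div]; exact le_max_left _ _
    · rw [Nat.sub_eq_zero_of_le h, Nat.cast_zero, zero_div]; exact le_max_right _ _
  simp only [preimage_comp]
  change (volume.restrict (Icc (0 : ℝ) 1)).real (gridIndex N ⁻¹' {k | d k ≠ d' (e k)}) ≤ _
  simp only [measureReal_preimage_gridIndex hN, mem_preimage, mem_singleton_iff, mem_ofPred_eq]
  calc _ ≤ (∑ θ, (#{k ∈ gridCells N | d k = θ} - #{k ∈ gridCells N | d' k = θ} : ℕ) : ℝ) / N := by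
        gcongr; exact_mod_cast hcard
    _ ≤ _ := by rw [Finset.sum_div]; exact Finset.sum_le_sum fun θ _ => hterm _ _

end Grid

section Approximation

variable {Θ : Type*} [Fintype Θ] [MeasurableSpace Θ] [MeasurableSingletonClass Θ]

theorem eventually_gridIndex_ne {K L : Set ℝ} (hK : IsCompact K) (hL : IsClosed L)
    (hKL : Disjoint K L) : ∀ᶠ N : ℕ in atTop, ∀ x ∈ K, ∀ y ∈ L, gridIndex N x ≠ gridIndex N y := by
  obtain ⟨δ, hδ, hsub⟩ := hK.exists_thickening_subset_open hL.isOpen_compl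
    (subset_compl_iff_disjoint_right.2 hKL)
  filter_upwards [eventually_gt_atTop 0,
    tendsto_one_div_atTop_nhds_zero_nat.eventually (gt_mem_nhds hδ)] with N hN hNδ x hx y hy hxy
  exact hsub (Metric.mem_thickening_iff.2
    ⟨x, hx, (dist_lt_of_gridIndex_eq hN hxy.symm).trans hNδ⟩) hy

theorem eventually_exists_measureReal_ne_gridIndex_le {μ : Measure ℝ} [IsFiniteMeasure μ]
    {c : ℝ → Θ} (hc : Measurable c) {ε : ℝ} (hε : 0 < ε) :
    ∀ᶠ N : ℕ in atTop, ∃ d : ℤ → Θ, μ.real {x | c x ≠ (d ∘ gridIndex N) x} ≤ ε := by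
  obtain ⟨η, hη, hηε⟩ := ENNReal.exists_nnreal_pos_mul_lt
    (ENNReal.natCast_ne_top (Fintype.card Θ)) (ENNReal.ofReal_pos.2 hε).ne'
  choose K hKc hK hKη using fun θ => (hc (measurableSet_singleton θ)).exists_isCompact_sdiff_lt
    (measure_ne_top μ _) (ENNReal.coe_ne_zero.2 hη.ne')
  have hsep : ∀ᶠ N : ℕ in atTop,
      ∀ θ θ', ∀ x ∈ K θ, ∀ y ∈ K θ', gridIndex N x = gridIndex N y → θ = θ' := by
    refine eventually_all.2 fun θ => eventually_all.2 fun θ' => ?_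
    by_cases h : θ = θ'
    · exact Eventually.of_forall fun _ _ _ _ _ _ => h
    have hdisj : Disjoint (K θ) (K θ') :=
      disjoint_left.2 fun x hx hx' => h ((hKc θ hx).symm.trans (hKc θ' hx'))
    filter_upwards [eventually_gridIndex_ne (hK θ) (hK θ').isClosed hdisj] with N hN x hx y hy hxy
    exact absurd hxy (hN x hx y hy)
  filter_upwards [hsep] with N hN
  -- colour each cell by the colour of one of its points in `⋃ θ, K θ`, if it has any
  let rep : ℤ → ℝ := fun k => Classical.epsilon fun y => (∃ θ, y ∈ K θ) ∧ gridIndex N y = k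
  refine ⟨c ∘ rep, ?_⟩
  have hgood : ∀ θ, ∀ x ∈ K θ, c (rep (gridIndex N x)) = c x := by
    intro θ x hx
    obtain ⟨⟨θ', hy⟩, hxy⟩ := Classical.epsilon_spec
      (p := fun y => (∃ θ, y ∈ K θ) ∧ gridIndex N y = gridIndex N x) ⟨x, ⟨θ, hx⟩, rfl⟩
    rw [hKc θ' hy, hKc θ hx, hN θ' θ _ hy x hx hxy]
  have hsub : {x | c x ≠ ((c ∘ rep) ∘ gridIndex N) x} ⊆ ⋃ θ, c ⁻¹' {θ} \ K θ := fun x hx =>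
    mem_iUnion.2 ⟨c x, rfl, fun hxK => hx (hgood _ x hxK).symm⟩
  refine ENNReal.toReal_le_of_le_ofReal hε.le
    ((measure_mono hsub).trans ((measure_iUnion_fintype_le _ _).trans ?_))
  calc ∑ θ, μ (c ⁻¹' {θ} \ K θ) ≤ ∑ _θ : Θ, (η : ℝ≥0∞) := Finset.sum_le_sum fun θ _ => (hKη θ).le
    _ ≤ ENNReal.ofReal ε := by
      rw [Finset.sum_const, Finset.card_univ, nsmul_eq_mul, mul_comm]
      exact hηε.le

theorem exists_bijOn_measurePreserving_measureReal_ne_le {c c' : ℝ → Θ} (hc : Measurable c)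
    (hc' : Measurable c') {ε : ℝ} (hε : 0 < ε) :
    ∃ σ : ℝ → ℝ, BijOn σ (Icc 0 1) (Icc 0 1) ∧
      MeasurePreserving σ (volume.restrict (Icc 0 1)) (volume.restrict (Icc 0 1)) ∧
      (volume.restrict (Icc (0 : ℝ) 1)).real {x | c x ≠ c' (σ x)}
        ≤ ∑ θ, max ((volume.restrict (Icc (0 : ℝ) 1)).real (c ⁻¹' {θ})
          - (volume.restrict (Icc (0 : ℝ) 1)).real (c' ⁻¹' {θ})) 0 + ε := by
  set μ := volume.restrict (Icc (0 : ℝ) 1)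
  have hε' : 0 < ε / 6 := by positivity
  obtain ⟨N, hN, ⟨d, hd⟩, d', hd'⟩ := ((eventually_gt_atTop 0).and
    ((eventually_exists_measureReal_ne_gridIndex_le (μ := μ) hc hε').and
      (eventually_exists_measureReal_ne_gridIndex_le (μ := μ) hc' hε'))).exists
  obtain ⟨e, he, hmis⟩ := exists_perm_measureReal_ne_le hN d d'
  set σ := intervalExchange N e
  have hσ : MeasurePreserving σ μ μ := measurePreserving_intervalExchange hN he
  refine ⟨σ, bijOn_intervalExchange hN he, hσ, ?_⟩
  have hdm : Measurable (d ∘ gridIndex N) := Measurable.of_discrete.comp measurable_gridIndex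
  have hd'm : Measurable (d' ∘ gridIndex N) := Measurable.of_discrete.comp measurable_gridIndex
  have htransport : μ.real {x | (d' ∘ e ∘ gridIndex N) x ≠ c' (σ x)}
      = μ.real {x | c' x ≠ (d' ∘ gridIndex N) x} := by
    have := hσ.measureReal_preimage (measurableSet_setOf_ne hc' hd'm).nullMeasurableSet
    simp only [preimage_ofPred_eq, Function.comp_apply, σ, gridIndex_intervalExchange hN] at this
    simpa only [Function.comp_apply, ne_comm (a := d' _)] using this
  have h₁ := measureReal_setOf_ne_le_add (μ := μ) c (d ∘ gridIndex N) (fun x => c' (σ x))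
  have h₂ := measureReal_setOf_ne_le_add (μ := μ) (d ∘ gridIndex N) (d' ∘ e ∘ gridIndex N)
    (fun x => c' (σ x))
  have hP := sum_max_sub_le_add (μ := μ) hc hc' hdm hd'm
  linarith

end Approximation

end ColoringDistance

open ColoringDistance

/-- **Coloring distance (Lemma 4).** For measurable colorings `c, c' : [0,1] → Θ` with
color vectors `w, w'`, the infimum over measure-preserving bijections `σ` of `[0,1]` of
the measure of the disagreement set `{x : c(x) ≠ c'(σ(x))}` equals
`(1/2) ∑_θ |w_θ − w'_θ|`; in particular it depends only on the color vectors and equals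
`∑_θ max(w_θ − w'_θ, 0)`. -/
theorem stmt_17 (Θ : Type) [Fintype Θ] [MeasurableSpace Θ] [MeasurableSingletonClass Θ]
    (c c' : ℝ → Θ) (hc : Measurable c) (hc' : Measurable c')
    (w w' : Θ → ℝ)
    (hw : ∀ θ, w θ = (volume (c ⁻¹' {θ} ∩ Set.Icc (0 : ℝ) 1)).toReal)
    (hw' : ∀ θ, w' θ = (volume (c' ⁻¹' {θ} ∩ Set.Icc (0 : ℝ) 1)).toReal) :
    IsGLB
      {r : ℝ | ∃ σ : ℝ → ℝ,
        Set.BijOn σ (Set.Icc (0 : ℝ) 1) (Set.Icc (0 : ℝ) 1) ∧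
        MeasurePreserving σ (volume.restrict (Set.Icc (0 : ℝ) 1))
          (volume.restrict (Set.Icc (0 : ℝ) 1)) ∧
        r = (volume {x ∈ Set.Icc (0 : ℝ) 1 | c x ≠ c' (σ x)}).toReal}
      ((1 / 2) * ∑ θ, |w θ - w' θ|) ∧
    (1 / 2) * ∑ θ, |w θ - w' θ| = ∑ θ, max (w θ - w' θ) 0 := by
  set μ := volume.restrict (Icc (0 : ℝ) 1)
  have hμ : ∀ s, (volume (s ∩ Icc (0 : ℝ) 1)).toReal = μ.real s := fun s =>
    (measureReal_restrict_apply' measurableSet_Icc).symm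
  have hdisagree : ∀ σ : ℝ → ℝ,
      (volume {x ∈ Icc (0 : ℝ) 1 | c x ≠ c' (σ x)}).toReal = μ.real {x | c x ≠ c' (σ x)} :=
    fun σ => by rw [← hμ, inter_comm]; rfl
  simp only [hw, hw', hμ, hdisagree]
  have hsum : ∑ θ, μ.real (c ⁻¹' {θ}) = ∑ θ, μ.real (c' ⁻¹' {θ}) := by
    rw [sum_measureReal_preimage_singleton _ fun θ _ => hc (measurableSet_singleton θ),
      sum_measureReal_preimage_singleton _ fun θ _ => hc' (measurableSet_singleton θ)]
    simp
  have hhalf := half_mul_sum_abs_sub_eq_sum_max Finset.univ hsum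
  refine ⟨⟨?_, fun b hb => ?_⟩, hhalf⟩
  · rintro _ ⟨σ, -, hσ, rfl⟩
    exact half_mul_sum_abs_sub_le_measureReal_ne hc hc' hσ
  · rw [hhalf]
    refine le_of_forall_pos_le_add fun ε hε => ?_
    obtain ⟨σ, hbij, hσ, hle⟩ := exists_bijOn_measurePreserving_measureReal_ne_le hc hc' hε
    exact (hb ⟨σ, hbij, hσ, rfl⟩).trans hle
end
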